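/- arXiv:2208.10578 — 8 statements merged into one kernel-verified Lean document; each statement's English description precedes it below -/
import Mathlib

section
/- For all real numbers q > 1, b > 0, and c > 0, the double integral ∫₀^∞ ∫₀^1 e^{-c·q^r·x^b} dr dx equals c^{-1/b} · Γ(1/b) · (1 - q^{-1/b}) / log q, where Γ is the Gamma function and log is the natural logarithm. -/
open MeasureTheory Real

open Set

lemma aux_integrable {a p : ℝ} (ha : 0 < a) (hp : 0 < p) :
    IntegrableOn (fun x : ℝ => Real.exp (-(a * x ^ p))) (Ioi 0) := by
  have h0 : IntegrableOn (fun y : ℝ => Real.exp (-y) * y ^ (1/p - 1)) (Ioi 0) :=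
    Real.GammaIntegral_convergent (by positivity)
  have h1 : IntegrableOn (fun y : ℝ => y ^ (1/p - 1) * Real.exp (-(a * y))) (Ioi 0) := by
    have h2 := (integrableOn_Ioi_comp_mul_left_iff
      (fun y : ℝ => Real.exp (-y) * y ^ (1/p - 1)) 0 ha).2 (by simpa using h0)
    refine IntegrableOn.congr_fun (h2.const_mul (a ^ (1 - 1/p))) (fun y hy => ?_) measurableSet_Ioi
    have hy0 : (0:ℝ) < y := hy
    rw [Real.mul_rpow ha.le hy0.le]
    have hone : a ^ (1 - 1/p) * a ^ (1/p - 1) = 1 := by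
      rw [← Real.rpow_add ha]; norm_num
    calc a ^ (1 - 1/p) * (Real.exp (-(a * y)) * (a ^ (1/p - 1) * y ^ (1/p - 1)))
        = (a ^ (1 - 1/p) * a ^ (1/p - 1)) * (y ^ (1/p - 1) * Real.exp (-(a * y))) := by ring
      _ = y ^ (1/p - 1) * Real.exp (-(a * y)) := by rw [hone, one_mul]
  have h3 := (integrableOn_Ioi_comp_rpow_iff'
      (fun y : ℝ => y ^ (1/p - 1) * Real.exp (-(a * y))) hp.ne').2 h1
  refine IntegrableOn.congr_fun h3 (fun x hx => ?_) measurableSet_Ioi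
  have hx0 : (0:ℝ) < x := hx
  rw [smul_eq_mul, ← mul_assoc, ← Real.rpow_mul hx0.le, ← Real.rpow_add hx0,
    show p - 1 + p * (1/p - 1) = 0 by field_simp; ring, Real.rpow_zero, one_mul]

/-- ξ(q,b,c) = ∫₀^∞ ∫₀^1 e^{-c q^r x^b} dr dx = c^{-1/b} Γ(1/b)(1-q^{-1/b})/log q. -/
theorem xi_integral (q b c : ℝ) (hq : 1 < q) (hb : 0 < b) (hc : 0 < c) :
    ∫ x in Set.Ioi (0:ℝ), ∫ r in (0:ℝ)..1, Real.exp (-(c * q ^ r * x ^ b)) =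
      c ^ (-(1/b)) * Real.Gamma (1/b) * (1 - q ^ (-(1/b))) / Real.log q := by
  have hq0 : (0:ℝ) < q := lt_trans one_pos hq
  have hlq : 0 < Real.log q := Real.log_pos hq
  have har : ∀ r : ℝ, 0 < c * q ^ r := fun r => mul_pos hc (rpow_pos_of_pos hq0 r)
  -- value of the inner (in x) integral
  have hval : ∀ r : ℝ, (∫ x in Set.Ioi (0:ℝ), Real.exp (-(c * q ^ r * x ^ b)))
      = (c * q ^ r) ^ (-(1/b)) * Real.Gamma (1/b + 1) := by
    intro r
    have h := integral_exp_neg_mul_rpow hb (har r)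
    simp_rw [neg_mul] at h
    rw [h, neg_div]
  -- continuity of the two-variable integrand
  have hF : Continuous fun p : ℝ × ℝ => Real.exp (-(c * q ^ p.2 * p.1 ^ b)) := by
    have h1 : Continuous fun x : ℝ => x ^ b := Real.continuous_rpow_const hb.le
    have h2 : Continuous fun r : ℝ => q ^ r := by
      have : ∀ r : ℝ, q ^ r = Real.exp (Real.log q * r) := fun r =>
        Real.rpow_def_of_pos hq0 r
      simp_rw [this]
      exact Real.continuous_exp.comp (continuous_const.mul continuous_id)
    exact Real.continuous_exp.comp
      (((continuous_const.mul (h2.comp continuous_snd)).mul (h1.comp continuous_fst)).neg)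
  -- integrability on the product
  have hInt : Integrable (fun p : ℝ × ℝ => Real.exp (-(c * q ^ p.2 * p.1 ^ b)))
      ((volume.restrict (Set.Ioi 0)).prod (volume.restrict (Set.Ioc 0 1))) := by
    rw [integrable_prod_iff' hF.aestronglyMeasurable]
    constructor
    · filter_upwards with r
      exact aux_integrable (har r) hb
    · have hgc : Continuous fun r : ℝ => (c * q ^ r) ^ (-(1/b)) * Real.Gamma (1/b + 1) := by
        have h2 : Continuous fun r : ℝ => c * q ^ r := by
          have : ∀ r : ℝ, q ^ r = Real.exp (Real.log q * r) := fun r =>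
            Real.rpow_def_of_pos hq0 r
          simp_rw [this]
          exact continuous_const.mul
            (Real.continuous_exp.comp (continuous_const.mul continuous_id))
        exact (h2.rpow_const (fun r => Or.inl (har r).ne')).mul continuous_const
      refine (hgc.integrableOn_Ioc).congr_fun (fun r _ => ?_) measurableSet_Ioc
      show (c * q ^ r) ^ (-(1/b)) * Real.Gamma (1/b + 1) = _
      rw [← hval r]
      refine setIntegral_congr_fun measurableSet_Ioi (fun x _ => ?_)
      rw [Real.norm_eq_abs, abs_of_pos (Real.exp_pos _)]
  -- swap the order of integration
  have hswap := integral_integral_swap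
    (f := fun x r : ℝ => Real.exp (-(c * q ^ r * x ^ b))) hInt
  have h01 : ∀ x : ℝ, (∫ r in (0:ℝ)..1, Real.exp (-(c * q ^ r * x ^ b)))
      = ∫ r in Set.Ioc (0:ℝ) 1, Real.exp (-(c * q ^ r * x ^ b)) := fun x =>
    intervalIntegral.integral_of_le zero_le_one
  simp_rw [h01]
  rw [hswap]
  simp_rw [hval]
  rw [← intervalIntegral.integral_of_le zero_le_one]
  -- rewrite the integrand as a constant times an exponential
  have hk : (-(1/b)) * Real.log q ≠ 0 := by
    apply mul_ne_zero
    · simp [hb.ne']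
    · exact hlq.ne'
  have hre : ∀ r : ℝ, (c * q ^ r) ^ (-(1/b)) * Real.Gamma (1/b + 1)
      = (c ^ (-(1/b)) * Real.Gamma (1/b + 1)) * Real.exp ((-(1/b)) * Real.log q * r) := by
    intro r
    rw [Real.mul_rpow hc.le (rpow_pos_of_pos hq0 r).le, ← Real.rpow_mul hq0.le,
      Real.rpow_def_of_pos hq0]
    ring_nf
  simp_rw [hre]
  rw [intervalIntegral.integral_const_mul]
  have hexp : (∫ r in (0:ℝ)..1, Real.exp ((-(1/b)) * Real.log q * r))
      = ((-(1/b)) * Real.log q)⁻¹ * (Real.exp ((-(1/b)) * Real.log q) - 1) := by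
    rw [show (fun r : ℝ => Real.exp ((-(1/b)) * Real.log q * r))
        = fun r : ℝ => Real.exp ((-(1/b)) * Real.log q * r) from rfl]
    rw [intervalIntegral.integral_comp_mul_left (fun y => Real.exp y) hk]
    simp [integral_exp]
  rw [hexp]
  have hqe : Real.exp ((-(1/b)) * Real.log q) = q ^ (-(1/b)) := by
    rw [Real.rpow_def_of_pos hq0]; ring_nf
  have hG : Real.Gamma (1/b + 1) = (1/b) * Real.Gamma (1/b) := by
    rw [Real.Gamma_add_one (by positivity : (1:ℝ)/b ≠ 0)]
  rw [hqe, hG]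
  field_simp
  ring
end

section
/- Let f : ℝ → ℝ be integrable and c ∈ ℝ. Then ∫₀^1 f(⌊c - r⌋ + r) dr = ∫_{c-1}^{c} f(y) dy, where ⌊·⌋ denotes the floor function. -/
/-!
Since `⌊c - r⌋ + r = c - fract (c - r)`, the substitution `x = c - r` turns the left side into the
integral of the `1`-periodic function `x ↦ f (c - fract x)` over `[c - 1, c]`. By periodicity this
equals its integral over `[0, 1]`, where `fract x = x` off the null set `{1}`; undoing the
substitution gives `∫_{c-1}^{c} f`.
-/

open MeasureTheory

theorem floor_sub_add_eq_sub_fract {R : Type*} [Ring R] [LinearOrder R] [FloorRing R] (c r : R) :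
    (⌊c - r⌋ : R) + r = c - Int.fract (c - r) := by
  rw [← Int.self_sub_fract]
  abel

theorem intervalIntegral_comp_fract {E : Type*} [NormedAddCommGroup E] [NormedSpace ℝ E]
    (g : ℝ → E) (t : ℝ) : ∫ x in t..t + 1, g (Int.fract x) = ∫ x in (0:ℝ)..1, g x := by
  have hper : Function.Periodic (fun x => g (Int.fract x)) 1 := (Int.fract_periodic ℝ).comp g
  rw [hper.intervalIntegral_add_eq t 0, zero_add]
  refine intervalIntegral.integral_congr_ae ((Measure.ae_ne volume 1).mono fun x hx1 hx => ?_)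
  rw [Set.uIoc_of_le zero_le_one] at hx
  rw [Int.fract_eq_self.2 ⟨hx.1.le, lt_of_le_of_ne hx.2 hx1⟩]

theorem floor_change_of_variables_general (f : ℝ → ℝ) (c : ℝ) :
    ∫ r in (0:ℝ)..1, f (↑⌊c - r⌋ + r) = ∫ y in (c-1)..c, f y := by
  simp_rw [floor_sub_add_eq_sub_fract]
  calc ∫ r in (0:ℝ)..1, f (c - Int.fract (c - r))
      = ∫ x in (c - 1)..(c - 1) + 1, f (c - Int.fract x) := by
        rw [intervalIntegral.integral_comp_sub_left (fun x => f (c - Int.fract x)), sub_zero,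
          sub_add_cancel]
    _ = ∫ x in (0:ℝ)..1, f (c - x) := intervalIntegral_comp_fract (fun x => f (c - x)) (c - 1)
    _ = ∫ y in (c-1)..c, f y := by
        rw [intervalIntegral.integral_comp_sub_left, sub_zero]

/-- ∫₀^1 f(⌊c - r⌋ + r) dr = ∫_{c-1}^{c} f(y) dy. -/
theorem floor_change_of_variables (f : ℝ → ℝ) (hf : MeasureTheory.Integrable f) (c : ℝ) :
    ∫ r in (0:ℝ)..1, f (↑⌊c - r⌋ + r) = ∫ y in (c-1)..c, f y :=
  floor_change_of_variables_general f c
end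

section
/- Fix real parameters τ > 0 and m > 0. Let A be a nonnegative real random variable with P(A ≥ x) = ∫₀^1 exp(-x^{1/τ} · 2^r / m) dr for every x > 0. Then E[A] = m^τ · Γ(τ) · (1 - 2^{-τ}) / log 2. -/
open MeasureTheory Real Set

lemma tGRA_aux_cont2 : Continuous fun r : ℝ => (2:ℝ) ^ r := by
  have : (fun r : ℝ => (2:ℝ) ^ r) = fun r => Real.exp (Real.log 2 * r) :=
    funext fun r => Real.rpow_def_of_pos two_pos r
  rw [this]
  exact Real.continuous_exp.comp (continuous_const.mul continuous_id)

lemma tGRA_aux_integrable {τ m : ℝ} (hτ : 0 < τ) (hm : 0 < m) (r : ℝ) :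
    IntegrableOn (fun t : ℝ => Real.exp (-((2:ℝ) ^ r / m) * t ^ τ⁻¹)) (Ioi 0) := by
  have hτi : (0:ℝ) < τ⁻¹ := inv_pos.mpr hτ
  have hb : 0 < (2:ℝ) ^ r / m := div_pos (Real.rpow_pos_of_pos two_pos r) hm
  have hf : IntegrableOn (fun y : ℝ => y ^ (τ - 1) * Real.exp (-((2:ℝ) ^ r / m) * y))
      (Ioi 0) := by
    have := integrableOn_rpow_mul_exp_neg_mul_rpow
      (by linarith : (-1:ℝ) < τ - 1) (zero_lt_one : (0:ℝ) < 1) hb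
    simpa [Real.rpow_one] using this
  have hsub := (integrableOn_Ioi_comp_rpow_iff'
      (fun y : ℝ => y ^ (τ - 1) * Real.exp (-((2:ℝ) ^ r / m) * y))
      (p := τ⁻¹) (ne_of_gt hτi)).mpr hf
  refine hsub.congr_fun (fun x hx => ?_) measurableSet_Ioi
  have hx0 : (0:ℝ) < x := hx
  have hexp : τ⁻¹ - 1 + τ⁻¹ * (τ - 1) = 0 := by
    have : τ⁻¹ * τ = 1 := inv_mul_cancel₀ (ne_of_gt hτ)
    nlinarith
  simp only [smul_eq_mul]
  rw [← Real.rpow_mul hx0.le, ← mul_assoc, ← Real.rpow_add hx0, hexp,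
    Real.rpow_zero, one_mul]

/-- First moment of the τ-GRA of one smoothed LogLog subsketch at cardinality 1. -/
theorem tGRA_loglog_mean {Ω : Type*} [MeasurableSpace Ω] (P : Measure Ω)
    [IsProbabilityMeasure P]
    (τ m : ℝ) (hτ : 0 < τ) (hm : 0 < m)
    (A : Ω → ℝ) (hA : Measurable A) (hA0 : ∀ ω, 0 ≤ A ω)
    (htail : ∀ x > 0, P {ω | x ≤ A ω} =
      ENNReal.ofReal (∫ r in (0:ℝ)..1, Real.exp (-(x ^ τ⁻¹ * 2 ^ r / m)))) :
    ∫ ω, A ω ∂P = m ^ τ * Real.Gamma τ * (1 - 2 ^ (-τ)) / Real.log 2 := by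
  have hτi : (0:ℝ) < τ⁻¹ := inv_pos.mpr hτ
  have hlog2 : (0:ℝ) < Real.log 2 := Real.log_pos (by norm_num)
  set C : ℝ := m ^ τ * Real.Gamma τ * (1 - 2 ^ (-τ)) / Real.log 2 with hCdef
  have hC0 : 0 ≤ C := by
    have h1 : (2:ℝ) ^ (-τ) < 1 :=
      Real.rpow_lt_one_of_one_lt_of_neg (by norm_num) (by linarith)
    have hΓ : 0 < Real.Gamma τ := Real.Gamma_pos_of_pos hτ
    have hmτ : 0 < m ^ τ := Real.rpow_pos_of_pos hm τ
    exact div_nonneg (mul_nonneg (mul_nonneg hmτ.le hΓ.le) (by linarith)) hlog2.le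
  -- continuity of the inner integrand in r (for fixed t)
  have hcontr : ∀ c : ℝ, Continuous fun r : ℝ => Real.exp (-(c * 2 ^ r / m)) := fun c =>
    Real.continuous_exp.comp (((continuous_const.mul tGRA_aux_cont2).div_const m).neg)
  -- Step 1 & 2: Bochner integral → lintegral → layer cake
  rw [MeasureTheory.integral_eq_lintegral_of_nonneg_ae
      (Filter.Eventually.of_forall hA0) hA.aestronglyMeasurable,
    lintegral_eq_lintegral_meas_le P (Filter.Eventually.of_forall hA0) hA.aemeasurable]
  -- Step 3: rewrite the tail and turn the interval integral into a lintegral in r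
  have step3 : ∫⁻ t in Ioi (0:ℝ), P {ω | t ≤ A ω}
      = ∫⁻ t in Ioi (0:ℝ), ∫⁻ r in Ioc (0:ℝ) 1,
          ENNReal.ofReal (Real.exp (-(t ^ τ⁻¹ * 2 ^ r / m))) := by
    refine setLIntegral_congr_fun measurableSet_Ioi ?_
    intro t ht
    beta_reduce
    rw [htail t ht, intervalIntegral.integral_of_le zero_le_one,
      MeasureTheory.ofReal_integral_eq_lintegral_ofReal
        ((hcontr (t ^ τ⁻¹)).integrableOn_Ioc)
        (Filter.Eventually.of_forall fun r => (Real.exp_pos _).le)]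
  rw [step3]
  -- Step 4: Tonelli swap
  have hmeas : AEMeasurable (Function.uncurry fun t r : ℝ =>
      ENNReal.ofReal (Real.exp (-(t ^ τ⁻¹ * 2 ^ r / m))))
      ((volume.restrict (Ioi (0:ℝ))).prod (volume.restrict (Ioc (0:ℝ) 1))) := by
    refine (ENNReal.continuous_ofReal.comp ?_).measurable.aemeasurable
    refine Real.continuous_exp.comp (Continuous.neg (Continuous.div_const ?_ m))
    exact ((Real.continuous_rpow_const hτi.le).comp continuous_fst).mul
      (tGRA_aux_cont2.comp continuous_snd)
  rw [lintegral_lintegral_swap hmeas]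
  -- Step 5: inner integral over t
  have step5 : ∀ r : ℝ, ∫⁻ t in Ioi (0:ℝ),
      ENNReal.ofReal (Real.exp (-(t ^ τ⁻¹ * 2 ^ r / m)))
      = ENNReal.ofReal (((2:ℝ) ^ r / m) ^ (-τ) * Real.Gamma (τ + 1)) := by
    intro r
    have hb : 0 < (2:ℝ) ^ r / m := div_pos (Real.rpow_pos_of_pos two_pos r) hm
    have heq : ∀ t : ℝ, -(t ^ τ⁻¹ * 2 ^ r / m) = -((2:ℝ) ^ r / m) * t ^ τ⁻¹ := fun t => by
      ring
    simp_rw [heq]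
    rw [← MeasureTheory.ofReal_integral_eq_lintegral_ofReal
        (tGRA_aux_integrable hτ hm r)
        (Filter.Eventually.of_forall fun t => (Real.exp_pos _).le),
      integral_exp_neg_mul_rpow hτi hb]
    congr 2
    · rw [neg_div, one_div, inv_inv]
    · rw [one_div, inv_inv]
  simp_rw [step5]
  -- Step 6: outer integral over r
  have hΓ1 : 0 < Real.Gamma (τ + 1) := Real.Gamma_pos_of_pos (by linarith)
  have hcontK : Continuous fun r : ℝ => ((2:ℝ) ^ r / m) ^ (-τ) * Real.Gamma (τ + 1) := by
    refine Continuous.mul ?_ continuous_const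
    refine Continuous.rpow_const (tGRA_aux_cont2.div_const m) fun r => Or.inl ?_
    exact ne_of_gt (div_pos (Real.rpow_pos_of_pos two_pos r) hm)
  rw [← MeasureTheory.ofReal_integral_eq_lintegral_ofReal hcontK.integrableOn_Ioc
      (Filter.Eventually.of_forall fun r => by positivity)]
  -- Step 7: compute the real integral
  have key : ∀ r : ℝ, ((2:ℝ) ^ r / m) ^ (-τ) * Real.Gamma (τ + 1)
      = m ^ τ * Real.Gamma (τ + 1) * Real.exp (-τ * Real.log 2 * r) := by
    intro r
    have h2r : (0:ℝ) < 2 ^ r := Real.rpow_pos_of_pos two_pos r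
    have e1 : ((2:ℝ) ^ r) ^ (-τ) = Real.exp (-τ * Real.log 2 * r) := by
      rw [← Real.rpow_mul (by norm_num : (0:ℝ) ≤ 2), Real.rpow_def_of_pos two_pos]
      ring_nf
    rw [Real.div_rpow h2r.le hm.le, Real.rpow_neg hm.le, div_inv_eq_mul, e1]
    ring
  have hintval : ∫ r in Ioc (0:ℝ) 1, ((2:ℝ) ^ r / m) ^ (-τ) * Real.Gamma (τ + 1) = C := by
    rw [← intervalIntegral.integral_of_le zero_le_one]
    simp_rw [key]
    rw [intervalIntegral.integral_const_mul]
    have hc : (-τ * Real.log 2) ≠ 0 := by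
      have := mul_pos hτ hlog2; intro h; nlinarith
    have : ∫ r in (0:ℝ)..1, Real.exp (-τ * Real.log 2 * r)
        = (-τ * Real.log 2)⁻¹ * (Real.exp (-τ * Real.log 2) - 1) := by
      rw [intervalIntegral.integral_comp_mul_left Real.exp hc, smul_eq_mul]
      simp [integral_exp]
    rw [this]
    have h2τ : (2:ℝ) ^ (-τ) = Real.exp (-τ * Real.log 2) := by
      rw [Real.rpow_def_of_pos two_pos]; ring_nf
    rw [hCdef, Real.Gamma_add_one (ne_of_gt hτ), h2τ]
    field_simp
    ring
  rw [hintval, ENNReal.toReal_ofReal hC0]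
end

section
/- Fix real parameters τ > 0 and m > 0. Let A be a nonnegative real random variable with P(A ≥ x) = ∫₀^1 exp(-x^{1/τ} · 2^r / m) dr for every x > 0. Then Var(A) = m^{2τ} · ( Γ(2τ)·(1 - 2^{-2τ})/log 2 - ( Γ(τ)·(1 - 2^{-τ})/log 2 )² ). -/
open MeasureTheory Real ProbabilityTheory Set

lemma myIntegrableOn {q b p : ℝ} (hq : -1 < q) (hp : 0 < p) (hb : 0 < b) :
    IntegrableOn (fun t : ℝ => t ^ q * Real.exp (-(b * t ^ p))) (Set.Ioi 0) := by
  set s : ℝ := (q + 1) / p with hs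
  have hspos : 0 < s := div_pos (by linarith) hp
  have h1 : IntegrableOn (fun y : ℝ => Real.exp (-y) * y ^ (s - 1)) (Ioi 0) :=
    Real.GammaIntegral_convergent hspos
  have h2 : IntegrableOn (fun y : ℝ => Real.exp (-(b * y)) * (b * y) ^ (s - 1)) (Ioi 0) := by
    have := (integrableOn_Ioi_comp_mul_left_iff
      (fun y : ℝ => Real.exp (-y) * y ^ (s - 1)) 0 hb).mpr (by simpa using h1)
    simpa using this
  have h3 : IntegrableOn (fun y : ℝ => y ^ (s - 1) * Real.exp (-(b * y))) (Ioi 0) := by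
    have h2' : IntegrableOn (fun y : ℝ => b ^ (-(s-1)) * (Real.exp (-(b * y)) * (b * y) ^ (s - 1))) (Ioi 0) := h2.const_mul _
    apply h2'.congr_fun ?_ measurableSet_Ioi
    intro y hy
    have hy0 : (0:ℝ) < y := hy
    simp only
    rw [Real.mul_rpow hb.le hy0.le]
    rw [show b ^ (-(s-1)) * (Real.exp (-(b*y)) * (b ^ (s-1) * y ^ (s-1)))
        = (b ^ (-(s-1)) * b ^ (s-1)) * (y ^ (s-1) * Real.exp (-(b*y))) by ring,
      ← Real.rpow_add hb, neg_add_cancel, Real.rpow_zero, one_mul]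
  have h4 := (integrableOn_Ioi_comp_rpow_iff'
    (fun y : ℝ => y ^ (s - 1) * Real.exp (-(b * y))) (p := p) hp.ne').mpr h3
  apply h4.congr_fun ?_ measurableSet_Ioi
  intro x hx
  have hx0 : (0:ℝ) < x := hx
  simp only [smul_eq_mul]
  rw [← Real.rpow_mul hx0.le, ← mul_assoc, ← Real.rpow_add hx0]
  congr 2
  have hps : p * s = q + 1 := by rw [hs]; field_simp
  linear_combination hps

lemma myIntegral {q b pw : ℝ} (hq : -1 < q) (hpw : 0 < pw) (hb : 0 < b) :
    ∫ t in Set.Ioi (0:ℝ), t ^ q * Real.exp (-(b * t ^ pw))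
      = b ^ (-(q + 1) / pw) * (1 / pw) * Real.Gamma ((q + 1) / pw) := by
  simpa [neg_mul] using integral_rpow_mul_exp_neg_mul_rpow hpw hq hb

lemma expIntegral01 {c : ℝ} (hc : c ≠ 0) :
    ∫ r in (0:ℝ)..1, Real.exp (c * r) = (Real.exp c - 1) / c := by
  have h := intervalIntegral.integral_comp_mul_left (a := (0:ℝ)) (b := 1)
    (f := fun x => Real.exp x) hc
  rw [h, mul_zero, mul_one, integral_exp, Real.exp_zero, smul_eq_mul]
  field_simp

lemma contAux (c m : ℝ) : Continuous (fun r : ℝ => Real.exp (-(c * 2 ^ r / m))) := by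
  have h2 : Continuous (fun r : ℝ => (2:ℝ) ^ r) :=
    continuous_const.rpow continuous_id (fun _ => Or.inl two_ne_zero)
  exact Real.continuous_exp.comp (((continuous_const.mul h2).div_const m).neg)

lemma keyLemma (τ m p : ℝ) (hτ : 0 < τ) (hm : 0 < m) (hp : 1 ≤ p) :
    ∫⁻ t in Set.Ioi (0:ℝ),
      ENNReal.ofReal (∫ r in (0:ℝ)..1, Real.exp (-(t ^ τ⁻¹ * 2 ^ r / m))) *
        ENNReal.ofReal (p * t ^ (p - 1))
      = ENNReal.ofReal
          (Real.Gamma (p * τ) * (1 - 2 ^ (-(p * τ))) / Real.log 2 * m ^ (p * τ)) := by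
  have hp0 : 0 < p := lt_of_lt_of_le one_pos hp
  have hpτ : 0 < p * τ := mul_pos hp0 hτ
  have hlog2 : 0 < Real.log 2 := Real.log_pos one_lt_two
  -- Step 1: express integrand as an inner lintegral over r
  have step1 : ∀ t ∈ Set.Ioi (0:ℝ),
      ENNReal.ofReal (∫ r in (0:ℝ)..1, Real.exp (-(t ^ τ⁻¹ * 2 ^ r / m))) *
        ENNReal.ofReal (p * t ^ (p - 1))
      = ∫⁻ r in Set.Ioc (0:ℝ) 1,
          ENNReal.ofReal (Real.exp (-(t ^ τ⁻¹ * 2 ^ r / m)) * (p * t ^ (p - 1))) := by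
    intro t ht
    have hcont := contAux (t ^ τ⁻¹) m
    have hint : IntegrableOn (fun r : ℝ => Real.exp (-(t ^ τ⁻¹ * 2 ^ r / m))) (Set.Ioc 0 1) :=
      hcont.integrableOn_Ioc
    rw [intervalIntegral.integral_of_le zero_le_one,
      ofReal_integral_eq_lintegral_ofReal hint (ae_of_all _ fun r => (Real.exp_pos _).le),
      ← lintegral_mul_const'' _ (hcont.measurable.ennreal_ofReal.aemeasurable)]
    congr 1
    ext r
    rw [ENNReal.ofReal_mul (Real.exp_pos _).le]
  rw [setLIntegral_congr_fun measurableSet_Ioi step1]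
  -- Step 2: Tonelli swap
  have c1 : Continuous fun z : ℝ × ℝ => z.1 ^ τ⁻¹ :=
    continuous_fst.rpow_const fun _ => Or.inr (inv_nonneg.2 hτ.le)
  have c2 : Continuous fun z : ℝ × ℝ => (2:ℝ) ^ z.2 :=
    continuous_const.rpow continuous_snd fun _ => Or.inl two_ne_zero
  have c3 : Continuous fun z : ℝ × ℝ => z.1 ^ (p - 1) :=
    continuous_fst.rpow_const fun _ => Or.inr (by linarith)
  have hmeas : AEMeasurable
      (Function.uncurry fun t r : ℝ =>
        ENNReal.ofReal (Real.exp (-(t ^ τ⁻¹ * 2 ^ r / m)) * (p * t ^ (p - 1))))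
      ((volume.restrict (Set.Ioi 0)).prod (volume.restrict (Set.Ioc 0 1))) := by
    have : Continuous fun z : ℝ × ℝ =>
        ENNReal.ofReal (Real.exp (-(z.1 ^ τ⁻¹ * 2 ^ z.2 / m)) * (p * z.1 ^ (p - 1))) :=
      ENNReal.continuous_ofReal.comp
        ((Real.continuous_exp.comp (((c1.mul c2).div_const m).neg)).mul
          (continuous_const.mul c3))
    exact this.measurable.aemeasurable
  rw [lintegral_lintegral_swap hmeas]
  -- Step 3: inner integral over t
  set C : ℝ := p * τ * Real.Gamma (p * τ) * m ^ (p * τ) with hC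
  set c0 : ℝ := -(p * τ) * Real.log 2 with hc0
  have step3 : ∀ r ∈ Set.Ioc (0:ℝ) 1,
      (∫⁻ t in Set.Ioi (0:ℝ),
        ENNReal.ofReal (Real.exp (-(t ^ τ⁻¹ * 2 ^ r / m)) * (p * t ^ (p - 1))))
      = ENNReal.ofReal (C * Real.exp (c0 * r)) := by
    intro r _
    set b : ℝ := 2 ^ r / m with hbdef
    have hb : 0 < b := div_pos (Real.rpow_pos_of_pos two_pos r) hm
    have hq : (-1:ℝ) < p - 1 := by linarith
    have heq : ∀ t : ℝ, Real.exp (-(t ^ τ⁻¹ * 2 ^ r / m)) * (p * t ^ (p - 1))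
        = p * (t ^ (p - 1) * Real.exp (-(b * t ^ τ⁻¹))) := by
      intro t
      rw [show t ^ τ⁻¹ * 2 ^ r / m = b * t ^ τ⁻¹ by rw [hbdef]; ring]
      ring
    simp_rw [heq]
    have hint : IntegrableOn
        (fun t : ℝ => p * (t ^ (p - 1) * Real.exp (-(b * t ^ τ⁻¹)))) (Set.Ioi 0) :=
      (myIntegrableOn hq (inv_pos.2 hτ) hb).const_mul p
    rw [← ofReal_integral_eq_lintegral_ofReal hint
      ((ae_restrict_iff' measurableSet_Ioi).2 (ae_of_all _ fun t ht =>
        mul_nonneg hp0.le (mul_nonneg (Real.rpow_nonneg (le_of_lt ht) _)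
          (Real.exp_pos _).le)))]
    rw [MeasureTheory.integral_const_mul, myIntegral hq (inv_pos.2 hτ) hb]
    congr 1
    have e1 : (p - 1 + 1) / τ⁻¹ = p * τ := by field_simp; ring
    have e2 : -(p - 1 + 1) / τ⁻¹ = -(p * τ) := by field_simp; ring
    have e3 : (1:ℝ) / τ⁻¹ = τ := by field_simp
    rw [e1, e2, e3]
    have hbp : b ^ (-(p * τ)) = Real.exp (c0 * r) * m ^ (p * τ) := by
      rw [hbdef, Real.div_rpow (Real.rpow_pos_of_pos two_pos r).le hm.le,
        Real.rpow_neg hm.le, div_eq_mul_inv, inv_inv, ← Real.rpow_mul (by norm_num : (0:ℝ) ≤ 2),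
        Real.rpow_def_of_pos two_pos]
      congr 2
      rw [hc0]; ring
    rw [hbp, hC]
    ring
  rw [setLIntegral_congr_fun measurableSet_Ioc step3]
  -- Step 4: outer integral over r
  have hCpos : 0 < C := by
    have := Real.Gamma_pos_of_pos hpτ
    positivity
  have hc0ne : c0 ≠ 0 := by
    have : 0 < p * τ * Real.log 2 := mul_pos hpτ hlog2
    rw [hc0]; intro h; nlinarith [h]
  have hint2 : IntegrableOn (fun r : ℝ => C * Real.exp (c0 * r)) (Set.Ioc 0 1) :=
    (continuous_const.mul (Real.continuous_exp.comp (continuous_const.mul continuous_id))).integrableOn_Ioc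
  rw [← ofReal_integral_eq_lintegral_ofReal hint2
    (ae_of_all _ fun r => mul_nonneg hCpos.le (Real.exp_pos _).le)]
  rw [← intervalIntegral.integral_of_le zero_le_one, intervalIntegral.integral_const_mul,
    expIntegral01 hc0ne]
  congr 1
  have hexpc0 : Real.exp c0 = 2 ^ (-(p * τ)) := by
    rw [Real.rpow_def_of_pos two_pos, hc0, mul_comm]
  rw [hexpc0, hC, hc0]
  field_simp
  ring


/-- Variance of the τ-GRA of one smoothed LogLog subsketch at cardinality 1. -/
theorem tGRA_loglog_variance {Ω : Type*} [MeasurableSpace Ω] (P : Measure Ω)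
    [IsProbabilityMeasure P]
    (τ m : ℝ) (hτ : 0 < τ) (hm : 0 < m)
    (A : Ω → ℝ) (hA : Measurable A) (hA0 : ∀ ω, 0 ≤ A ω)
    (htail : ∀ x > 0, P {ω | x ≤ A ω} =
      ENNReal.ofReal (∫ r in (0:ℝ)..1, Real.exp (-(x ^ τ⁻¹ * 2 ^ r / m)))) :
    variance A P = m ^ (2 * τ) *
      (Real.Gamma (2 * τ) * (1 - 2 ^ (-(2 * τ))) / Real.log 2 -
        (Real.Gamma τ * (1 - 2 ^ (-τ)) / Real.log 2) ^ 2) := by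
  have hlog2 : 0 < Real.log 2 := Real.log_pos one_lt_two
  set c₁ : ℝ := Real.Gamma τ * (1 - 2 ^ (-τ)) / Real.log 2 * m ^ τ with hc₁
  set c₂ : ℝ := Real.Gamma (2 * τ) * (1 - 2 ^ (-(2 * τ))) / Real.log 2 * m ^ (2 * τ) with hc₂
  have hnn : ∀ s : ℝ, 0 < s → 0 ≤ Real.Gamma s * (1 - 2 ^ (-s)) / Real.log 2 * m ^ s := by
    intro s hs
    have h1 : (2:ℝ) ^ (-s) ≤ 1 :=
      Real.rpow_le_one_of_one_le_of_nonpos one_le_two (by linarith)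
    have h2 := Real.Gamma_pos_of_pos hs
    have h3 := Real.rpow_pos_of_pos hm s
    exact mul_nonneg (div_nonneg (mul_nonneg h2.le (by linarith : (0:ℝ) ≤ 1 - 2 ^ (-s))) hlog2.le) h3.le
  -- layer cake for E[A]
  have E1 : ∫⁻ ω, ENNReal.ofReal (A ω) ∂P = ENNReal.ofReal c₁ := by
    have lc := lintegral_comp_eq_lintegral_meas_le_mul P (f := A) (g := fun _ => 1)
      (ae_of_all _ hA0) hA.aemeasurable (fun t _ => intervalIntegrable_const)
      (ae_of_all _ fun _ => zero_le_one)
    simp only [intervalIntegral.integral_const, smul_eq_mul, mul_one, sub_zero] at lc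
    rw [lc]
    have := keyLemma τ m 1 hτ hm le_rfl
    simp only [one_mul] at this
    rw [← this]
    apply setLIntegral_congr_fun measurableSet_Ioi (fun t ht => ?_)
    rw [htail t ht]
    norm_num
  have E2 : ∫⁻ ω, ENNReal.ofReal (A ω ^ 2) ∂P = ENNReal.ofReal c₂ := by
    have lc := lintegral_comp_eq_lintegral_meas_le_mul P (f := A) (g := fun t => 2 * t)
      (ae_of_all _ hA0) hA.aemeasurable
      (fun t _ => (continuous_const.mul continuous_id).intervalIntegrable _ _)
      ((ae_restrict_iff' measurableSet_Ioi).2 (ae_of_all _ fun t ht => by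
        have : (0:ℝ) < t := ht; linarith))
    have e : ∀ ω, (∫ t in (0:ℝ)..A ω, 2 * t) = A ω ^ 2 := by
      intro ω
      rw [intervalIntegral.integral_const_mul, integral_id]
      norm_num
      ring
    simp_rw [e] at lc
    rw [lc]
    have := keyLemma τ m 2 hτ hm one_le_two
    rw [← this]
    apply setLIntegral_congr_fun measurableSet_Ioi (fun t ht => ?_)
    rw [htail t ht]
    norm_num [Real.rpow_one]
  have hInt1 : Integrable A P := by
    refine ⟨hA.aestronglyMeasurable, ?_⟩
    rw [hasFiniteIntegral_iff_ofReal (ae_of_all _ hA0), E1]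
    exact ENNReal.ofReal_lt_top
  have hInt2 : Integrable (fun ω => A ω ^ 2) P := by
    refine ⟨(hA.pow_const 2).aestronglyMeasurable, ?_⟩
    rw [hasFiniteIntegral_iff_ofReal (ae_of_all _ fun ω => sq_nonneg _), E2]
    exact ENNReal.ofReal_lt_top
  have hMem : MemLp A 2 P := (memLp_two_iff_integrable_sq hA.aestronglyMeasurable).2 hInt2
  rw [variance_eq_sub hMem]
  have i1 : ∫ ω, A ω ∂P = c₁ := by
    rw [integral_eq_lintegral_of_nonneg_ae (ae_of_all _ hA0) hA.aestronglyMeasurable, E1,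
      ENNReal.toReal_ofReal (hnn τ hτ)]
  have i2 : ∫ ω, A ω ^ 2 ∂P = c₂ := by
    rw [integral_eq_lintegral_of_nonneg_ae (ae_of_all _ fun ω => sq_nonneg _)
      (hA.pow_const 2).aestronglyMeasurable, E2,
      ENNReal.toReal_ofReal (hnn (2 * τ) (by linarith))]
  have hpow : ∫ ω, (A ^ 2) ω ∂P = c₂ := by
    simpa [Pi.pow_apply] using i2
  rw [show P[A ^ 2] = c₂ from hpow, show P[A] = c₁ from i1]
  have hmsq : m ^ (2 * τ) = (m ^ τ) ^ 2 := by
    rw [two_mul, Real.rpow_add hm, sq]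
  rw [hc₁, hc₂, hmsq]
  ring
end

section
/- The limit as τ → 0⁺ of τ^{-2} · ( (Γ(2τ)·log 2 / Γ(τ)²) · (1 + 2^{-τ})/(1 - 2^{-τ}) - 1 ) equals (2π² + (log 2)²)/12. -/
open Real Filter Set

noncomputable section TGRAAux


lemma gammaAnalytic : AnalyticOnNhd ℝ Real.Gamma (Set.Ioi 0) := by
  intro x hx
  have h1 : Real.Gamma = fun x : ℝ => (Complex.Gamma (Complex.ofRealCLM x)).re := by
    funext y
    rw [Complex.ofRealCLM_apply, Complex.Gamma_ofReal, Complex.ofReal_re]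
  rw [h1]
  have hU : IsOpen {z : ℂ | 0 < z.re} := isOpen_lt continuous_const Complex.continuous_re
  have hd : DifferentiableOn ℂ Complex.Gamma {z : ℂ | 0 < z.re} := by
    intro z hz
    refine (Complex.differentiableAt_Gamma z fun m => ?_).differentiableWithinAt
    intro h
    simp only [mem_setOf_eq, h, Complex.neg_re, Complex.natCast_re] at hz
    have := m.cast_nonneg (α := ℝ)
    linarith
  have hA : AnalyticAt ℂ Complex.Gamma ((Complex.ofRealCLM : ℝ →L[ℝ] ℂ) x) := by
    refine hd.analyticAt (hU.mem_nhds ?_)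
    simpa using hx
  exact (Complex.reCLM.analyticAt _).comp (hA.restrictScalars.comp (Complex.ofRealCLM.analyticAt x))

def G1 : ℝ → ℝ := deriv Real.Gamma
def G2 : ℝ → ℝ := deriv G1

lemma g1Analytic : AnalyticOnNhd ℝ G1 (Set.Ioi 0) := gammaAnalytic.deriv
lemma g2Analytic : AnalyticOnNhd ℝ G2 (Set.Ioi 0) := g1Analytic.deriv

lemma hasDerivAt_Gamma' {x : ℝ} (hx : 0 < x) : HasDerivAt Real.Gamma (G1 x) x :=
  ((gammaAnalytic x hx).differentiableAt).hasDerivAt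
lemma hasDerivAt_G1 {x : ℝ} (hx : 0 < x) : HasDerivAt G1 (G2 x) x :=
  ((g1Analytic x hx).differentiableAt).hasDerivAt

def psi (x : ℝ) : ℝ := G1 x / Real.Gamma x
def psid (x : ℝ) : ℝ := G2 x / Real.Gamma x - (G1 x / Real.Gamma x) ^ 2

lemma Gamma_pos {x : ℝ} (hx : 0 < x) : 0 < Real.Gamma x := Real.Gamma_pos_of_pos hx

lemma hasDerivAt_psi {x : ℝ} (hx : 0 < x) : HasDerivAt psi (psid x) x := by
  have h := (hasDerivAt_G1 hx).div (hasDerivAt_Gamma' hx) (Gamma_pos hx).ne'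
  refine h.congr_deriv ?_
  unfold psid G1
  field_simp [(Gamma_pos hx).ne']

lemma continuousAt_psi {x : ℝ} (hx : 0 < x) : ContinuousAt psi x :=
  ((g1Analytic x hx).continuousAt).div ((gammaAnalytic x hx).continuousAt) (Gamma_pos hx).ne'

lemma continuousAt_psid {x : ℝ} (hx : 0 < x) : ContinuousAt psid x := by
  unfold psid
  exact (((g2Analytic x hx).continuousAt).div ((gammaAnalytic x hx).continuousAt)
    (Gamma_pos hx).ne').sub ((((g1Analytic x hx).continuousAt).div
    ((gammaAnalytic x hx).continuousAt) (Gamma_pos hx).ne').pow 2)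


lemma contAt_Gamma {x : ℝ} (hx : 0 < x) : ContinuousAt Real.Gamma x :=
  (gammaAnalytic x hx).continuousAt

lemma HasDerivAt.comp_const_mul' {f : ℝ → ℝ} {d : ℝ} (c : ℝ) {x : ℝ} (h : HasDerivAt f d (c * x)) :
    HasDerivAt (fun y => f (c * y)) (c * d) x := by
  have := h.comp x ((hasDerivAt_id x).const_mul c)
  simpa [Function.comp_def, mul_comm] using this

lemma HasDerivAt.comp_const_sub' {f : ℝ → ℝ} {d : ℝ} (c : ℝ) {x : ℝ} (h : HasDerivAt f d (c - x)) :
    HasDerivAt (fun y => f (c - y)) (-d) x := by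
  have := h.comp x ((hasDerivAt_id x).const_sub c)
  simpa [Function.comp_def] using this

lemma HasDerivAt.comp_add_const' {f : ℝ → ℝ} {d : ℝ} (c : ℝ) {x : ℝ} (h : HasDerivAt f d (x + c)) :
    HasDerivAt (fun y => f (y + c)) d x := by
  have := h.comp x ((hasDerivAt_id x).add_const c)
  simpa [Function.comp_def] using this

lemma eventually_deriv_zero {f : ℝ → ℝ} {d x c : ℝ} (h : f =ᶠ[nhds x] fun _ => c)
    (hd : HasDerivAt f d x) : d = 0 := by
  rw [← hd.deriv, h.deriv_eq, deriv_const]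

lemma sin_pi_pos {x : ℝ} (hx : x ∈ Ioo (0:ℝ) 1) : 0 < Real.sin (π * x) :=
  Real.sin_pos_of_pos_of_lt_pi (mul_pos Real.pi_pos hx.1)
    (by nlinarith [Real.pi_pos, hx.1, hx.2])

lemma refl0 {x : ℝ} (hx : x ∈ Ioo (0:ℝ) 1) :
    Real.Gamma x * Real.Gamma (1 - x) * Real.sin (π * x) = π := by
  rw [Real.Gamma_mul_Gamma_one_sub x, div_mul_cancel₀]
  exact (sin_pi_pos hx).ne'

lemma hasDerivAt_sin_pi (x : ℝ) :
    HasDerivAt (fun y : ℝ => Real.sin (π * y)) (π * Real.cos (π * x)) x := by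
  have := (Real.hasDerivAt_sin (π * x)).comp_const_mul' π (x := x)
  simpa using this

lemma hasDerivAt_cos_pi (x : ℝ) :
    HasDerivAt (fun y : ℝ => Real.cos (π * y)) (-(π * Real.sin (π * x))) x := by
  have := (Real.hasDerivAt_cos (π * x)).comp_const_mul' π (x := x)
  convert this using 1
  ring

lemma refl1 {x : ℝ} (hx : x ∈ Ioo (0:ℝ) 1) :
    psi x - psi (1 - x) + π * Real.cos (π * x) / Real.sin (π * x) = 0 := by
  have hx1 : 0 < x := hx.1
  have hx2 : 0 < 1 - x := by linarith [hx.2]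
  have h1mx : HasDerivAt (fun y : ℝ => Real.Gamma (1 - y)) (-G1 (1 - x)) x :=
    (hasDerivAt_Gamma' hx2).comp_const_sub' 1
  have hf : HasDerivAt (fun y => Real.Gamma y * Real.Gamma (1 - y) * Real.sin (π * y))
      ((fun y => (G1 y * Real.Gamma (1 - y) + Real.Gamma y * (-G1 (1 - y))) * Real.sin (π * y)
        + Real.Gamma y * Real.Gamma (1 - y) * (π * Real.cos (π * y))) x) x :=
    ((hasDerivAt_Gamma' hx1).mul h1mx).mul (hasDerivAt_sin_pi x)
  have hev : (fun y => Real.Gamma y * Real.Gamma (1 - y) * Real.sin (π * y))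
      =ᶠ[nhds x] fun _ => π := by
    filter_upwards [isOpen_Ioo.mem_nhds hx] with y hy using refl0 hy
  have hz := eventually_deriv_zero hev hf
  simp only at hz
  have hΓx := (Gamma_pos hx1).ne'
  have hΓ1x := (Gamma_pos hx2).ne'
  have hs := (sin_pi_pos hx).ne'
  have key : (psi x - psi (1 - x) + π * Real.cos (π * x) / Real.sin (π * x))
      * (Real.Gamma x * Real.Gamma (1 - x) * Real.sin (π * x)) =
      (G1 x * Real.Gamma (1 - x) + Real.Gamma x * (-G1 (1 - x))) * Real.sin (π * x)
        + Real.Gamma x * Real.Gamma (1 - x) * (π * Real.cos (π * x)) := by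
    unfold psi
    have hs' : Real.sin (x * π) ≠ 0 := by rwa [mul_comm]
    field_simp
    ring
  have hprod : (psi x - psi (1 - x) + π * Real.cos (π * x) / Real.sin (π * x))
      * (Real.Gamma x * Real.Gamma (1 - x) * Real.sin (π * x)) = 0 := by
    rw [key]; exact hz
  rcases mul_eq_zero.mp hprod with h | h
  · exact h
  · exact absurd h (by positivity)

lemma psid_half : psid (1/2) + psid (1/2) = π ^ 2 := by
  have hr : ∀ x ∈ Ioo (0:ℝ) 1,
      (fun y => psi y - psi (1 - y) + π * Real.cos (π * y) / Real.sin (π * y)) x = 0 :=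
    fun x hx => refl1 hx
  have hmem : (1/2 : ℝ) ∈ Ioo (0:ℝ) 1 := by norm_num
  have hx2 : (0:ℝ) < 1 - 1/2 := by norm_num
  have hd : HasDerivAt (fun y => psi y - psi (1 - y) + π * Real.cos (π * y) / Real.sin (π * y))
      (psid (1/2) + psid (1 - 1/2)
        + ((-(π * Real.sin (π * (1/2)))) * π * Real.sin (π * (1/2))
            - π * Real.cos (π * (1/2)) * (π * Real.cos (π * (1/2))))
          / Real.sin (π * (1/2)) ^ 2) (1/2 : ℝ) := by
    have h1 : HasDerivAt (fun y : ℝ => psi (1 - y)) (-psid (1 - (1/2:ℝ))) (1/2:ℝ) :=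
      (hasDerivAt_psi hx2).comp_const_sub' 1
    have h2 : HasDerivAt (fun y : ℝ => π * Real.cos (π * y) / Real.sin (π * y))
        (((-(π * Real.sin (π * (1/2)))) * π * Real.sin (π * (1/2))
            - π * Real.cos (π * (1/2)) * (π * Real.cos (π * (1/2))))
          / Real.sin (π * (1/2)) ^ 2) (1/2 : ℝ) := by
      have := ((hasDerivAt_cos_pi (1/2)).const_mul π).div (hasDerivAt_sin_pi (1/2))
        (by rw [mul_one_div, Real.sin_pi_div_two]; norm_num)
      refine this.congr_deriv ?_
      ring
    have := ((hasDerivAt_psi (by norm_num : (0:ℝ) < 1/2)).sub h1).add h2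
    refine this.congr_deriv ?_
    ring
  have hev : (fun y => psi y - psi (1 - y) + π * Real.cos (π * y) / Real.sin (π * y))
      =ᶠ[nhds (1/2 : ℝ)] fun _ => 0 := by
    filter_upwards [isOpen_Ioo.mem_nhds hmem] with y hy using refl1 hy
  have hz := hev.deriv_eq
  rw [hd.deriv, deriv_const] at hz
  rw [mul_one_div, Real.sin_pi_div_two, Real.cos_pi_div_two] at hz
  norm_num at hz
  norm_num
  linarith [hz]

lemma dup0 {x : ℝ} (hx : 0 < x) :
    Real.Gamma x * Real.Gamma (x + 1/2) * Real.exp ((2*x - 1) * Real.log 2)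
      = Real.Gamma (2*x) * Real.sqrt π := by
  rw [Real.Gamma_mul_Gamma_add_half x]
  rw [show ((2:ℝ) ^ (1 - 2*x)) = Real.exp ((1 - 2*x) * Real.log 2) by
    rw [Real.rpow_def_of_pos (by norm_num), mul_comm]]
  have : Real.exp ((1 - 2*x) * Real.log 2) * Real.exp ((2*x - 1) * Real.log 2) = 1 := by
    rw [← Real.exp_add, show (1 - 2*x) * Real.log 2 + (2*x - 1) * Real.log 2 = 0 by ring,
      Real.exp_zero]
  calc Real.Gamma (2*x) * Real.exp ((1 - 2*x) * Real.log 2) * Real.sqrt π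
        * Real.exp ((2*x - 1) * Real.log 2)
      = Real.Gamma (2*x) * Real.sqrt π
        * (Real.exp ((1 - 2*x) * Real.log 2) * Real.exp ((2*x - 1) * Real.log 2)) := by ring
    _ = Real.Gamma (2*x) * Real.sqrt π := by rw [this, mul_one]

lemma dup1 {x : ℝ} (hx : 0 < x) :
    psi x + psi (x + 1/2) + 2 * Real.log 2 - 2 * psi (2*x) = 0 := by
  have hx2 : 0 < x + 1/2 := by linarith
  have hx3 : 0 < 2*x := by linarith
  set L := Real.log 2 with hL
  have hE : HasDerivAt (fun y : ℝ => Real.exp ((2*y - 1) * L))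
      (Real.exp ((2*x - 1) * L) * (2*L)) x := by
    have hlin : HasDerivAt (fun y : ℝ => (2*y - 1) * L) (2*L) x := by
      simpa using (((hasDerivAt_id x).const_mul 2).sub_const 1).mul_const L
    exact (Real.hasDerivAt_exp ((2*x-1)*L)).comp x hlin
  have hΓ2 : HasDerivAt (fun y : ℝ => Real.Gamma (2*y) * Real.sqrt π)
      (2 * G1 (2*x) * Real.sqrt π) x := by
    have := ((hasDerivAt_Gamma' hx3).comp_const_mul' 2).mul_const (Real.sqrt π)
    convert this using 1
  have hplus : HasDerivAt (fun y : ℝ => Real.Gamma (y + 1/2)) (G1 (x + 1/2)) x :=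
    (hasDerivAt_Gamma' hx2).comp_add_const' (1/2)
  have hf : HasDerivAt (fun y => Real.Gamma y * Real.Gamma (y + 1/2) * Real.exp ((2*y - 1) * L))
      ((G1 x * Real.Gamma (x+1/2) + Real.Gamma x * G1 (x+1/2)) * Real.exp ((2*x-1)*L)
        + Real.Gamma x * Real.Gamma (x+1/2) * (Real.exp ((2*x-1)*L) * (2*L))) x :=
    ((hasDerivAt_Gamma' hx).mul hplus).mul hE
  have hev : (fun y => Real.Gamma y * Real.Gamma (y + 1/2) * Real.exp ((2*y - 1) * L))
      =ᶠ[nhds x] fun y => Real.Gamma (2*y) * Real.sqrt π := by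
    filter_upwards [isOpen_Ioi.mem_nhds hx] with y hy using dup0 hy
  have hder : (G1 x * Real.Gamma (x+1/2) + Real.Gamma x * G1 (x+1/2)) * Real.exp ((2*x-1)*L)
        + Real.Gamma x * Real.Gamma (x+1/2) * (Real.exp ((2*x-1)*L) * (2*L))
      = 2 * G1 (2*x) * Real.sqrt π := by
    rw [← hf.deriv, hev.deriv_eq, hΓ2.deriv]
  have hΓx := (Gamma_pos hx).ne'
  have hΓx2 := (Gamma_pos hx2).ne'
  have hΓx3 := (Gamma_pos hx3).ne'
  have hEx := (Real.exp_pos ((2*x-1)*L)).ne'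
  have hsπ : Real.sqrt π ≠ 0 := by positivity
  have key : (psi x + psi (x + 1/2) + 2 * L - 2 * psi (2*x))
      * (Real.Gamma x * Real.Gamma (x+1/2) * Real.exp ((2*x-1)*L)) = 0 := by
    have expand : (psi x + psi (x + 1/2) + 2 * L)
        * (Real.Gamma x * Real.Gamma (x+1/2) * Real.exp ((2*x-1)*L))
        = (G1 x * Real.Gamma (x+1/2) + Real.Gamma x * G1 (x+1/2)) * Real.exp ((2*x-1)*L)
          + Real.Gamma x * Real.Gamma (x+1/2) * (Real.exp ((2*x-1)*L) * (2*L)) := by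
      unfold psi; field_simp
    have expand2 : (2 * psi (2*x)) * (Real.Gamma (2*x) * Real.sqrt π)
        = 2 * G1 (2*x) * Real.sqrt π := by
      unfold psi; field_simp
    rw [sub_mul, expand, hder, ← expand2, dup0 hx, sub_self]
  rcases mul_eq_zero.mp key with h | h
  · exact h
  · exact absurd h (by positivity)

lemma psid_one_aux : psid (1/2) + psid 1 - 4 * psid 1 = 0 := by
  have hmem : (1/2 : ℝ) ∈ Ioi (0:ℝ) := by norm_num
  have hd : HasDerivAt (fun y => psi y + psi (y + 1/2) + 2 * Real.log 2 - 2 * psi (2*y))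
      (psid (1/2) + psid (1/2 + 1/2) - 2 * (2 * psid (2 * (1/2:ℝ)))) (1/2 : ℝ) := by
    have h1 := hasDerivAt_psi (by norm_num : (0:ℝ) < 1/2)
    have h2 : HasDerivAt (fun y : ℝ => psi (y + 1/2)) (psid ((1/2:ℝ) + 1/2)) (1/2:ℝ) :=
      (hasDerivAt_psi (by norm_num)).comp_add_const' (1/2)
    have h3 : HasDerivAt (fun y : ℝ => psi (2*y)) (2 * psid (2 * (1/2:ℝ))) (1/2:ℝ) :=
      (hasDerivAt_psi (by norm_num)).comp_const_mul' 2
    exact ((h1.add h2).add_const (2 * Real.log 2)).sub (h3.const_mul 2)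
  have hev : (fun y => psi y + psi (y + 1/2) + 2 * Real.log 2 - 2 * psi (2*y))
      =ᶠ[nhds (1/2 : ℝ)] fun _ => 0 := by
    filter_upwards [isOpen_Ioi.mem_nhds hmem] with y hy using dup1 hy
  have hz := eventually_deriv_zero hev hd
  norm_num at hz ⊢
  linarith [hz]

lemma psid_one : psid 1 = π ^ 2 / 6 := by
  have h1 := psid_half
  have h2 := psid_one_aux
  linarith

lemma key2 {f f' f'' : ℝ → ℝ} {δ c : ℝ} (hδ : 0 < δ)
    (hf : ∀ x ∈ Ioo (-δ) δ, HasDerivAt f (f' x) x)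
    (hf' : ∀ x ∈ Ioo (-δ) δ, HasDerivAt f' (f'' x) x)
    (h0 : f 0 = 0) (h1 : f' 0 = 0)
    (h2 : Tendsto f'' (nhdsWithin 0 (Ioi 0)) (nhds c)) :
    Tendsto (fun x => f x / x ^ 2) (nhdsWithin 0 (Ioi 0)) (nhds (c/2)) := by
  have hmem0 : (0:ℝ) ∈ Ioo (-δ) δ := by constructor <;> linarith
  have hIoo : Ioo (0:ℝ) δ ∈ nhdsWithin (0:ℝ) (Ioi 0) := Ioo_mem_nhdsGT_of_mem (by simp [hδ.le, hδ])
  have hf0 : Tendsto f (nhdsWithin 0 (Ioi 0)) (nhds 0) := by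
    have := ((hf 0 hmem0).continuousAt.continuousWithinAt (s := Ioi (0:ℝ))).tendsto
    rwa [h0] at this
  have hf'0 : Tendsto f' (nhdsWithin 0 (Ioi 0)) (nhds 0) := by
    have := ((hf' 0 hmem0).continuousAt.continuousWithinAt (s := Ioi (0:ℝ))).tendsto
    rwa [h1] at this
  have inner : Tendsto (fun x => f' x / (2 * x)) (nhdsWithin 0 (Ioi 0)) (nhds (c/2)) := by
    apply HasDerivAt.lhopital_zero_nhdsGT (f' := f'') (g' := fun _ => (2:ℝ))
    · filter_upwards [hIoo] with x hx
      exact hf' x ⟨by linarith [hx.1], hx.2⟩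
    · filter_upwards with x
      simpa using ((hasDerivAt_id x).const_mul 2)
    · filter_upwards with x using two_ne_zero
    · exact hf'0
    · have : Tendsto (fun x : ℝ => 2 * x) (nhdsWithin 0 (Ioi 0)) (nhds (2 * 0)) :=
        (continuous_const.mul continuous_id).continuousAt.continuousWithinAt.tendsto
      simpa using this
    · simpa [div_eq_mul_inv] using h2.div_const 2
  apply HasDerivAt.lhopital_zero_nhdsGT (f' := f') (g' := fun x => 2 * x)
  · filter_upwards [hIoo] with x hx
    exact hf x ⟨by linarith [hx.1], hx.2⟩
  · filter_upwards with x
    have := hasDerivAt_pow 2 x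
    norm_num at this
    convert this using 1
  · filter_upwards [hIoo] with x hx
    have : (0:ℝ) < x := hx.1
    positivity
  · exact hf0
  · have : Tendsto (fun x : ℝ => x ^ 2) (nhdsWithin 0 (Ioi 0)) (nhds (0 ^ 2)) :=
      (continuous_pow 2).continuousAt.continuousWithinAt.tendsto
    simpa using this
  · exact inner

lemma key3 {f f' f'' f''' : ℝ → ℝ} {δ c : ℝ} (hδ : 0 < δ)
    (hf : ∀ x ∈ Ioo (-δ) δ, HasDerivAt f (f' x) x)
    (hf' : ∀ x ∈ Ioo (-δ) δ, HasDerivAt f' (f'' x) x)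
    (hf'' : ∀ x ∈ Ioo (-δ) δ, HasDerivAt f'' (f''' x) x)
    (h0 : f 0 = 0) (h1 : f' 0 = 0) (h2 : f'' 0 = 0)
    (h3 : Tendsto f''' (nhdsWithin 0 (Ioi 0)) (nhds c)) :
    Tendsto (fun x => f x / x ^ 3) (nhdsWithin 0 (Ioi 0)) (nhds (c/6)) := by
  have hmem0 : (0:ℝ) ∈ Ioo (-δ) δ := by constructor <;> linarith
  have hIoo : Ioo (0:ℝ) δ ∈ nhdsWithin (0:ℝ) (Ioi 0) := Ioo_mem_nhdsGT_of_mem (by simp [hδ.le, hδ])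
  have hf0 : Tendsto f (nhdsWithin 0 (Ioi 0)) (nhds 0) := by
    have := ((hf 0 hmem0).continuousAt.continuousWithinAt (s := Ioi (0:ℝ))).tendsto
    rwa [h0] at this
  have inner : Tendsto (fun x => f' x / (3 * x ^ 2)) (nhdsWithin 0 (Ioi 0)) (nhds (c/6)) := by
    have base := key2 (f := f') (f' := f'') (f'' := f''') hδ hf' hf'' h1 h2 h3
    have := base.div_const 3
    rw [show c/2/3 = c/6 by ring] at this
    apply this.congr'
    filter_upwards [hIoo] with x hx
    rw [div_div, mul_comm (x ^ 2) 3]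
  apply HasDerivAt.lhopital_zero_nhdsGT (f' := f') (g' := fun x => 3 * x ^ 2)
  · filter_upwards [hIoo] with x hx
    exact hf x ⟨by linarith [hx.1], hx.2⟩
  · filter_upwards with x
    have := hasDerivAt_pow 3 x
    norm_num at this
    convert this using 1
  · filter_upwards [hIoo] with x hx
    have : (0:ℝ) < x := hx.1
    positivity
  · exact hf0
  · have : Tendsto (fun x : ℝ => x ^ 3) (nhdsWithin 0 (Ioi 0)) (nhds ((0:ℝ) ^ 3)) :=
      (continuous_pow 3).continuousAt.continuousWithinAt.tendsto
    simpa using this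
  · exact inner

def gg1 (τ : ℝ) : ℝ := Real.sin (π * τ) / (π * τ)
def gg2 (τ : ℝ) : ℝ := Real.Gamma (1 - τ) ^ 2 / Real.Gamma (1 - 2*τ)
def Ee (τ : ℝ) : ℝ := Real.exp (-Real.log 2 * τ)
def gg3 (τ : ℝ) : ℝ := Real.log 2 * τ * (1 + Ee τ) / (2 * (1 - Ee τ))
def gg4 (τ : ℝ) : ℝ := 1 / Real.cos (π * τ)

lemma T1 : Tendsto (fun τ => (gg1 τ - 1) / τ ^ 2) (nhdsWithin 0 (Ioi 0))
    (nhds (-π ^ 2 / 6)) := by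
  have hkey : Tendsto (fun τ => (Real.sin (π * τ) - π * τ) / τ ^ 3) (nhdsWithin 0 (Ioi 0))
      (nhds (-(π ^ 3) / 6)) := by
    apply key3 (f' := fun τ => π * Real.cos (π * τ) - π)
      (f'' := fun τ => -(π ^ 2 * Real.sin (π * τ)))
      (f''' := fun τ => -(π ^ 2 * (π * Real.cos (π * τ)))) one_pos
    · intro x _
      exact ((hasDerivAt_sin_pi x).sub ((hasDerivAt_id x).const_mul π)).congr_deriv (by ring)
    · intro x _
      have := ((hasDerivAt_cos_pi x).const_mul π).sub_const π
      refine this.congr_deriv ?_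
      ring
    · intro x _
      exact ((hasDerivAt_sin_pi x).const_mul (π ^ 2)).neg
    · simp
    · simp
    · simp
    · have : ContinuousAt (fun τ => -(π ^ 2 * (π * Real.cos (π * τ)))) 0 := by fun_prop
      have ht := this.continuousWithinAt (s := Ioi (0:ℝ)).tendsto
      convert ht using 2
      rw [mul_zero, Real.cos_zero]
      ring
  have := hkey.mul_const (1/π)
  have hval : -(π ^ 3) / 6 * (1/π) = -π ^ 2 / 6 := by
    field_simp
  rw [hval] at this
  apply this.congr'
  filter_upwards [Ioo_mem_nhdsGT_of_mem (by norm_num : (0:ℝ) ∈ Ico (0:ℝ) 1)] with τ hτ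
  have hτ0 : (0:ℝ) < τ := hτ.1
  have hπτ : π * τ ≠ 0 := by positivity
  unfold gg1
  field_simp

lemma T4 : Tendsto (fun τ => (gg4 τ - 1) / τ ^ 2) (nhdsWithin 0 (Ioi 0))
    (nhds (π ^ 2 / 2)) := by
  have hkey : Tendsto (fun τ => (1 - Real.cos (π * τ)) / τ ^ 2) (nhdsWithin 0 (Ioi 0))
      (nhds (π ^ 2 / 2)) := by
    apply key2 (f' := fun τ => π * Real.sin (π * τ))
      (f'' := fun τ => π ^ 2 * Real.cos (π * τ)) one_pos
    · intro x _
      have := (hasDerivAt_cos_pi x).const_sub 1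
      refine this.congr_deriv ?_
      ring
    · intro x _
      have := (hasDerivAt_sin_pi x).const_mul π
      refine this.congr_deriv ?_
      ring
    · simp
    · simp
    · have : ContinuousAt (fun τ => π ^ 2 * Real.cos (π * τ)) 0 := by fun_prop
      have ht := this.continuousWithinAt (s := Ioi (0:ℝ)).tendsto
      simpa using ht
  have hcos : Tendsto (fun τ : ℝ => 1 / Real.cos (π * τ)) (nhdsWithin 0 (Ioi 0)) (nhds 1) := by
    have : ContinuousAt (fun τ : ℝ => 1 / Real.cos (π * τ)) 0 := by
      apply ContinuousAt.div
      · fun_prop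
      · fun_prop
      · simp
    have ht := this.continuousWithinAt (s := Ioi (0:ℝ)).tendsto
    simpa using ht
  have := hkey.mul hcos
  rw [mul_one] at this
  apply this.congr'
  filter_upwards [Ioo_mem_nhdsGT_of_mem (by norm_num : (0:ℝ) ∈ Ico (0:ℝ) (1/4))] with τ hτ
  have hτ0 : (0:ℝ) < τ := hτ.1
  have hcospos : 0 < Real.cos (π * τ) := by
    apply Real.cos_pos_of_mem_Ioo
    constructor
    · nlinarith [Real.pi_pos]
    · nlinarith [Real.pi_pos, hτ.2]
  unfold gg4
  field_simp

lemma hasDerivAt_Ee (x : ℝ) : HasDerivAt Ee (-Real.log 2 * Ee x) x :=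
  (Real.hasDerivAt_exp (-Real.log 2 * x)).comp_const_mul' (-Real.log 2)

lemma Ee_lt_one {τ : ℝ} (hτ : 0 < τ) : Ee τ < 1 := by
  rw [Ee, Real.exp_lt_one_iff]
  have h2 : 0 < Real.log 2 := Real.log_pos (by norm_num)
  nlinarith

lemma Ee_pos (τ : ℝ) : 0 < Ee τ := Real.exp_pos _

lemma slopeE : Tendsto (fun τ => τ / (2 * (1 - Ee τ))) (nhdsWithin 0 (Ioi 0))
    (nhds (1 / (2 * Real.log 2))) := by
  have hL : Real.log 2 ≠ 0 := (Real.log_pos (by norm_num)).ne'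
  have hd : HasDerivAt (fun τ => 1 - Ee τ) (Real.log 2) 0 := by
    have := (hasDerivAt_Ee 0).const_sub 1
    refine this.congr_deriv ?_
    simp [Ee]
  have hs := hasDerivAt_iff_tendsto_slope.mp hd
  have hs' : Tendsto (fun τ => (1 - Ee τ) / τ) (nhdsWithin 0 (Ioi 0)) (nhds (Real.log 2)) := by
    have hmono : nhdsWithin (0:ℝ) (Ioi 0) ≤ nhdsWithin 0 {(0:ℝ)}ᶜ :=
      nhdsWithin_mono 0 (fun x hx => ne_of_gt hx)
    have := hs.mono_left hmono
    apply this.congr'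
    filter_upwards [self_mem_nhdsWithin] with τ hτ
    have : (0:ℝ) < τ := hτ
    simp [slope_def_field, Ee]
  have := (hs'.inv₀ hL).div_const 2
  have hv : (Real.log 2)⁻¹ / 2 = 1 / (2 * Real.log 2) := by
    rw [inv_eq_one_div, div_div, one_div, one_div, mul_comm]
  rw [hv] at this
  apply this.congr'
  filter_upwards [self_mem_nhdsWithin] with τ hτ
  have hτ0 : (0:ℝ) < τ := hτ
  have h1E : 1 - Ee τ ≠ 0 := by
    have := Ee_lt_one hτ0
    linarith
  rw [inv_div, div_div, mul_comm (1 - Ee τ) 2]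

lemma T3 : Tendsto (fun τ => (gg3 τ - 1) / τ ^ 2) (nhdsWithin 0 (Ioi 0))
    (nhds (Real.log 2 ^ 2 / 12)) := by
  set L := Real.log 2 with hL
  have hkey : Tendsto (fun τ => (L * τ * (1 + Ee τ) - 2 * (1 - Ee τ)) / τ ^ 3)
      (nhdsWithin 0 (Ioi 0)) (nhds (L ^ 3 / 6)) := by
    apply key3 (f' := fun τ => L * (1 + Ee τ) - L ^ 2 * τ * Ee τ - 2 * L * Ee τ)
      (f'' := fun τ => L ^ 3 * τ * Ee τ)
      (f''' := fun τ => L ^ 3 * Ee τ - L ^ 4 * τ * Ee τ) one_pos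
    · intro x _
      have h1 : HasDerivAt (fun τ => L * τ * (1 + Ee τ))
          (L * (1 + Ee x) + L * x * (-L * Ee x)) x := by
        have := (((hasDerivAt_id x).const_mul L)).mul ((hasDerivAt_Ee x).const_add 1)
        simp only [id_eq] at this
        refine this.congr_deriv ?_
        ring
      have h2 : HasDerivAt (fun τ => 2 * (1 - Ee τ)) (2 * (L * Ee x)) x := by
        have := ((hasDerivAt_Ee x).const_sub 1).const_mul 2
        refine this.congr_deriv ?_
        ring
      have := h1.sub h2
      refine this.congr_deriv ?_
      ring
    · intro x _
      have h1 : HasDerivAt (fun τ => L * (1 + Ee τ)) (L * (-L * Ee x)) x :=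
        ((hasDerivAt_Ee x).const_add 1).const_mul L
      have h2 : HasDerivAt (fun τ => L ^ 2 * τ * Ee τ)
          (L ^ 2 * Ee x + L ^ 2 * x * (-L * Ee x)) x := by
        have := (((hasDerivAt_id x).const_mul (L ^ 2))).mul (hasDerivAt_Ee x)
        simp only [id_eq] at this
        refine this.congr_deriv ?_
        ring
      have h3 : HasDerivAt (fun τ => 2 * L * Ee τ) (2 * L * (-L * Ee x)) x :=
        (hasDerivAt_Ee x).const_mul (2 * L)
      have := (h1.sub h2).sub h3
      refine this.congr_deriv ?_
      ring
    · intro x _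
      have := (((hasDerivAt_id x).const_mul (L ^ 3))).mul (hasDerivAt_Ee x)
      simp only [id_eq] at this
      refine this.congr_deriv ?_
      ring
    · simp [Ee]
    · simp only [Ee, mul_zero, neg_mul, neg_zero, Real.exp_zero, mul_one, zero_mul, mul_zero]
      ring
    · simp
    · have hc : ContinuousAt (fun τ => L ^ 3 * Ee τ - L ^ 4 * τ * Ee τ) 0 := by
        unfold Ee
        fun_prop
      have ht := hc.continuousWithinAt (s := Ioi (0:ℝ)).tendsto
      simp only [Ee, mul_zero, neg_mul, zero_mul, Real.exp_zero, mul_one, sub_zero] at ht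
      convert ht using 2
      simp [Ee]
  have hprod := hkey.mul slopeE
  have hv : L ^ 3 / 6 * (1 / (2 * L)) = L ^ 2 / 12 := by
    have hL0 : L ≠ 0 := (Real.log_pos (by norm_num)).ne'
    field_simp
    ring
  rw [hv] at hprod
  apply hprod.congr'
  filter_upwards [self_mem_nhdsWithin] with τ hτ
  have hτ0 : (0:ℝ) < τ := hτ
  have h1E : (0:ℝ) < 1 - Ee τ := by linarith [Ee_lt_one hτ0]
  have hB : (2:ℝ) * (1 - Ee τ) ≠ 0 := by positivity
  have h1 : gg3 τ - 1 = (L * τ * (1 + Ee τ) - 2 * (1 - Ee τ)) / (2 * (1 - Ee τ)) := by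
    unfold gg3
    rw [eq_div_iff hB, sub_mul, div_mul_cancel₀ _ hB, one_mul]
  rw [h1, div_div, div_mul_div_comm, div_eq_div_iff (by positivity) (by positivity)]
  ring

lemma HasDerivAt.comp_one_sub_two_mul {f : ℝ → ℝ} {d x : ℝ} (h : HasDerivAt f d (1 - 2*x)) :
    HasDerivAt (fun y => f (1 - 2*y)) (-2*d) x := by
  have hlin : HasDerivAt (fun y : ℝ => 1 - 2*y) (-(2*1)) x :=
    ((hasDerivAt_id x).const_mul 2).const_sub 1
  have := h.comp x hlin
  simp only [Function.comp_def, mul_one] at this ⊢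
  refine this.congr_deriv ?_
  ring

def hh (τ : ℝ) : ℝ := -2 * psi (1 - τ) + 2 * psi (1 - 2*τ)
def gg2d (τ : ℝ) : ℝ := gg2 τ * hh τ
def hhd (τ : ℝ) : ℝ := 2 * psid (1 - τ) - 4 * psid (1 - 2*τ)
def gg2dd (τ : ℝ) : ℝ := gg2d τ * hh τ + gg2 τ * hhd τ

lemma mem_pos₁ {τ : ℝ} (hτ : τ ∈ Ioo (-(1/8) : ℝ) (1/8)) : (0:ℝ) < 1 - τ := by
  have := hτ.2; linarith
lemma mem_pos₂ {τ : ℝ} (hτ : τ ∈ Ioo (-(1/8) : ℝ) (1/8)) : (0:ℝ) < 1 - 2*τ := by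
  have := hτ.2; linarith

lemma hasDerivAt_gg2 {τ : ℝ} (hτ : τ ∈ Ioo (-(1/8) : ℝ) (1/8)) :
    HasDerivAt gg2 (gg2d τ) τ := by
  have h1 := mem_pos₁ hτ
  have h2 := mem_pos₂ hτ
  have hnum : HasDerivAt (fun y => Real.Gamma (1 - y) ^ 2)
      (2 * Real.Gamma (1 - τ) ^ 1 * (-G1 (1 - τ))) τ :=
    ((hasDerivAt_Gamma' h1).comp_const_sub' 1).pow 2
  have hden : HasDerivAt (fun y => Real.Gamma (1 - 2*y)) (-2 * G1 (1 - 2*τ)) τ :=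
    (hasDerivAt_Gamma' h2).comp_one_sub_two_mul
  have := hnum.div hden (Gamma_pos h2).ne'
  refine this.congr_deriv ?_
  unfold gg2d gg2 hh psi
  field_simp [(Gamma_pos h1).ne', (Gamma_pos h2).ne']
  ring

lemma hasDerivAt_hh {τ : ℝ} (hτ : τ ∈ Ioo (-(1/8) : ℝ) (1/8)) :
    HasDerivAt hh (hhd τ) τ := by
  have h1 := mem_pos₁ hτ
  have h2 := mem_pos₂ hτ
  have ha : HasDerivAt (fun y => -2 * psi (1 - y)) (-2 * (-psid (1 - τ))) τ :=
    ((hasDerivAt_psi h1).comp_const_sub' 1).const_mul (-2)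
  have hb : HasDerivAt (fun y => 2 * psi (1 - 2*y)) (2 * (-2 * psid (1 - 2*τ))) τ :=
    ((hasDerivAt_psi h2).comp_one_sub_two_mul).const_mul 2
  have := ha.add hb
  refine this.congr_deriv ?_
  unfold hhd
  ring

lemma hasDerivAt_gg2d {τ : ℝ} (hτ : τ ∈ Ioo (-(1/8) : ℝ) (1/8)) :
    HasDerivAt gg2d (gg2dd τ) τ :=
  (hasDerivAt_gg2 hτ).mul (hasDerivAt_hh hτ)

lemma gg2_zero : gg2 0 = 1 := by
  unfold gg2
  norm_num [Real.Gamma_one]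

lemma hh_zero : hh 0 = 0 := by
  unfold hh
  norm_num

lemma contAt_comp₁ {f : ℝ → ℝ} {x : ℝ} (h : ContinuousAt f (1 - x)) :
    ContinuousAt (fun y : ℝ => f (1 - y)) x := by
  have := h.comp (f := fun y : ℝ => 1 - y) (by fun_prop)
  simpa [Function.comp_def] using this

lemma contAt_comp₂ {f : ℝ → ℝ} {x : ℝ} (h : ContinuousAt f (1 - 2*x)) :
    ContinuousAt (fun y : ℝ => f (1 - 2*y)) x := by
  have := h.comp (f := fun y : ℝ => 1 - 2*y) (by fun_prop)
  simpa [Function.comp_def] using this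

lemma contAt_gg2 {τ : ℝ} (hτ : τ ∈ Ioo (-(1/8) : ℝ) (1/8)) : ContinuousAt gg2 τ := by
  have h1 := mem_pos₁ hτ
  have h2 := mem_pos₂ hτ
  exact ((contAt_comp₁ (contAt_Gamma h1)).pow 2).div (contAt_comp₂ (contAt_Gamma h2))
    (Gamma_pos h2).ne'

lemma contAt_hh {τ : ℝ} (hτ : τ ∈ Ioo (-(1/8) : ℝ) (1/8)) : ContinuousAt hh τ := by
  have h1 := mem_pos₁ hτ
  have h2 := mem_pos₂ hτ
  exact (continuousAt_const.mul (contAt_comp₁ (continuousAt_psi h1))).add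
    (continuousAt_const.mul (contAt_comp₂ (continuousAt_psi h2)))

lemma contAt_hhd {τ : ℝ} (hτ : τ ∈ Ioo (-(1/8) : ℝ) (1/8)) : ContinuousAt hhd τ := by
  have h1 := mem_pos₁ hτ
  have h2 := mem_pos₂ hτ
  exact (continuousAt_const.mul (contAt_comp₁ (continuousAt_psid h1))).sub
    (continuousAt_const.mul (contAt_comp₂ (continuousAt_psid h2)))

lemma contAt_gg2dd {τ : ℝ} (hτ : τ ∈ Ioo (-(1/8) : ℝ) (1/8)) : ContinuousAt gg2dd τ :=
  (((contAt_gg2 hτ).mul (contAt_hh hτ)).mul (contAt_hh hτ)).add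
    ((contAt_gg2 hτ).mul (contAt_hhd hτ))

lemma gg2dd_zero : gg2dd 0 = -(π ^ 2 / 3) := by
  have : hhd 0 = -(π ^ 2 / 3) := by
    unfold hhd
    norm_num [psid_one]
    ring
  unfold gg2dd gg2d
  rw [gg2_zero, hh_zero, this]
  ring

lemma T2 : Tendsto (fun τ => (gg2 τ - 1) / τ ^ 2) (nhdsWithin 0 (Ioi 0))
    (nhds (-π ^ 2 / 6)) := by
  have h := key2 (f := fun τ => gg2 τ - 1) (f' := gg2d) (f'' := gg2dd)
    (δ := 1/8) (c := -(π ^ 2 / 3)) (by norm_num)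
    (fun x hx => (hasDerivAt_gg2 hx).sub_const 1)
    (fun x hx => hasDerivAt_gg2d hx)
    (by show gg2 0 - 1 = 0; rw [gg2_zero, sub_self])
    (by unfold gg2d; rw [hh_zero, mul_zero])
    (by
      have := ((contAt_gg2dd (by norm_num : (0:ℝ) ∈ Ioo (-(1/8):ℝ) (1/8))).continuousWithinAt
        (s := Ioi (0:ℝ))).tendsto
      rwa [gg2dd_zero] at this)
  convert h using 2
  ring

lemma tendsto_one_of {g : ℝ → ℝ} {c : ℝ}
    (h : Tendsto (fun τ => (g τ - 1) / τ ^ 2) (nhdsWithin 0 (Ioi 0)) (nhds c)) :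
    Tendsto g (nhdsWithin 0 (Ioi 0)) (nhds 1) := by
  have hsq : Tendsto (fun τ : ℝ => τ ^ 2) (nhdsWithin 0 (Ioi 0)) (nhds 0) := by
    have : Tendsto (fun τ : ℝ => τ ^ 2) (nhdsWithin 0 (Ioi 0)) (nhds ((0:ℝ) ^ 2)) :=
      (continuous_pow 2).continuousAt.continuousWithinAt.tendsto
    simpa using this
  have := (h.mul hsq).add_const 1
  rw [mul_zero, zero_add] at this
  apply this.congr'
  filter_upwards [self_mem_nhdsWithin] with τ hτ
  have hτ0 : (0:ℝ) < τ := hτ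
  rw [div_mul_cancel₀ _ (by positivity : τ ^ 2 ≠ 0)]
  ring

lemma sin2_ne {τ : ℝ} (hτ : τ ∈ Ioo (0:ℝ) (1/8)) : Real.sin (π * (2*τ)) ≠ 0 := by
  have : (2*τ) ∈ Ioo (0:ℝ) 1 := ⟨by linarith [hτ.1], by linarith [hτ.2]⟩
  exact (sin_pi_pos this).ne'

lemma main_identity {τ : ℝ} (hτ : τ ∈ Ioo (0:ℝ) (1/8)) :
    (τ ^ 2)⁻¹ * ((Real.Gamma (2 * τ) * Real.log 2 / Real.Gamma τ ^ 2) *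
        ((1 + 2 ^ (-τ)) / (1 - 2 ^ (-τ))) - 1)
    = (gg1 τ - 1) / τ ^ 2 * (gg2 τ * (gg3 τ * gg4 τ))
      + (gg2 τ - 1) / τ ^ 2 * (gg3 τ * gg4 τ)
      + (gg3 τ - 1) / τ ^ 2 * gg4 τ + (gg4 τ - 1) / τ ^ 2 := by
  have hτ0 : (0:ℝ) < τ := hτ.1
  have hτ1 : τ ∈ Ioo (0:ℝ) 1 := ⟨hτ.1, by linarith [hτ.2]⟩
  have hE : (2:ℝ) ^ (-τ) = Ee τ := by
    rw [Real.rpow_def_of_pos (by norm_num : (0:ℝ) < 2), Ee]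
    ring_nf
  have hΓ1 := (Gamma_pos (by linarith [hτ.2] : (0:ℝ) < 1 - τ)).ne'
  have hΓ2 := (Gamma_pos (by linarith [hτ.2] : (0:ℝ) < 1 - 2*τ)).ne'
  have hsin := (sin_pi_pos hτ1).ne'
  have hsin2 := sin2_ne hτ
  have hcos : (0:ℝ) < Real.cos (π * τ) := by
    apply Real.cos_pos_of_mem_Ioo
    constructor
    · nlinarith [Real.pi_pos]
    · nlinarith [Real.pi_pos, hτ.2]
  have h1mE : (0:ℝ) < 1 - Ee τ := by linarith [Ee_lt_one hτ0]
  have h1pE : (0:ℝ) < 1 + Ee τ := by linarith [Ee_pos τ]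
  have hπ := Real.pi_ne_zero
  have hG : Real.Gamma τ = π / (Real.Gamma (1 - τ) * Real.sin (π * τ)) := by
    rw [eq_div_iff (mul_ne_zero hΓ1 hsin), ← mul_assoc]
    exact refl0 hτ1
  have hG2 : Real.Gamma (2*τ) = π / (Real.Gamma (1 - 2*τ) * Real.sin (π * (2*τ))) := by
    rw [eq_div_iff (mul_ne_zero hΓ2 hsin2), ← mul_assoc]
    exact refl0 (⟨by linarith [hτ.1], by linarith [hτ.2]⟩ : (2*τ) ∈ Ioo (0:ℝ) 1)
  have hs2 : Real.sin (π * (2*τ)) = 2 * Real.sin (π * τ) * Real.cos (π * τ) := by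
    rw [show π * (2*τ) = 2 * (π * τ) by ring, Real.sin_two_mul]
  have hF : Real.Gamma (2 * τ) * Real.log 2 / Real.Gamma τ ^ 2 *
      ((1 + 2 ^ (-τ)) / (1 - 2 ^ (-τ))) = gg1 τ * (gg2 τ * (gg3 τ * gg4 τ)) := by
    rw [hE, hG, hG2, hs2]
    unfold gg1 gg2 gg3 gg4
    field_simp
  rw [hF]
  have hτ2 : (τ:ℝ) ^ 2 ≠ 0 := by positivity
  field_simp
  ring

end TGRAAux

/-- The τ → 0⁺ limit of the LogLog τ-GRA relative variance is (2π² + log²2)/12. -/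
theorem tGRA_loglog_variance_limit :
    Tendsto (fun τ : ℝ =>
      (τ ^ 2)⁻¹ * ((Real.Gamma (2 * τ) * Real.log 2 / Real.Gamma τ ^ 2) *
        ((1 + 2 ^ (-τ)) / (1 - 2 ^ (-τ))) - 1))
      (nhdsWithin 0 (Set.Ioi 0))
      (nhds ((2 * Real.pi ^ 2 + Real.log 2 ^ 2) / 12)) := by
  have t2one := tendsto_one_of T2
  have t3one := tendsto_one_of T3
  have t4one := tendsto_one_of T4
  have hsum := ((T1.mul (t2one.mul (t3one.mul t4one))).add
    (T2.mul (t3one.mul t4one))).add ((T3.mul t4one).add T4)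
  have hval : -π ^ 2 / 6 * (1 * (1 * 1)) + -π ^ 2 / 6 * (1 * 1)
      + (Real.log 2 ^ 2 / 12 * 1 + π ^ 2 / 2)
      = (2 * Real.pi ^ 2 + Real.log 2 ^ 2) / 12 := by
    ring
  rw [hval] at hsum
  apply hsum.congr'
  filter_upwards [Ioo_mem_nhdsGT_of_mem (by norm_num : (0:ℝ) ∈ Ico (0:ℝ) (1/8))] with τ hτ
  rw [main_identity hτ]
  ring
end

section
/- Fix τ > 0. For each positive integer m and each integer i, let s(m,i) = i/m + log₂ m. Then the sums Σ_{i∈ℤ} exp(-2^{-s(m,i)}) · 2^{-τ·s(m,i)} converge for every m, and lim_{m→∞} (1/m) · Σ_{i∈ℤ} exp(-2^{-s(m,i)}) · 2^{-τ·s(m,i)} = Γ(τ) / log 2. -/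
open Real Filter MeasureTheory Set


section Aux
variable {τ : ℝ}

private noncomputable def gfun (τ : ℝ) : ℝ → ℝ := fun u => Real.exp (-(Real.exp (-u)) - τ * u)

private theorem rexp_neg_deriv_aux :
    ∀ x ∈ univ, HasDerivWithinAt (rexp ∘ Neg.neg) (-rexp (-x)) univ x :=
  fun x _ ↦ mul_neg_one (rexp (-x)) ▸
    ((Real.hasDerivAt_exp (-x)).comp x (hasDerivAt_neg x)).hasDerivWithinAt

private theorem rexp_neg_image_aux : rexp ∘ Neg.neg '' univ = Ioi 0 := by
  rw [Set.image_comp, Set.image_univ_of_surjective neg_surjective, Set.image_univ, Real.range_exp]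

private theorem rexp_neg_injOn_aux : univ.InjOn (rexp ∘ Neg.neg) :=
  Real.exp_injective.injOn.comp neg_injective.injOn (univ.mapsTo_univ _)

private theorem smul_aux (hτ : 0 < τ) (x : ℝ) :
    rexp (-x) • (Real.exp (-(rexp ∘ Neg.neg) x) * ((rexp ∘ Neg.neg) x) ^ (τ - 1)) = gfun τ x := by
  simp only [Function.comp_apply, smul_eq_mul, gfun]
  rw [Real.rpow_def_of_pos (exp_pos _), Real.log_exp, ← Real.exp_add, ← Real.exp_add]
  congr 1
  ring

private theorem gfun_integrable (hτ : 0 < τ) : Integrable (gfun τ) := by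
  have h := Real.GammaIntegral_convergent hτ
  rw [← rexp_neg_image_aux, integrableOn_image_iff_integrableOn_abs_deriv_smul
    MeasurableSet.univ rexp_neg_deriv_aux rexp_neg_injOn_aux] at h
  have : IntegrableOn (gfun τ) univ := by
    refine h.congr_fun (fun x _ => ?_) MeasurableSet.univ
    beta_reduce
    rw [abs_neg, abs_of_pos (exp_pos _)]
    exact smul_aux hτ x
  rwa [integrableOn_univ] at this

private theorem gfun_integral (hτ : 0 < τ) : ∫ u, gfun τ u = Real.Gamma τ := by
  rw [Real.Gamma_eq_integral hτ, ← rexp_neg_image_aux, integral_image_eq_integral_abs_deriv_smul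
    MeasurableSet.univ rexp_neg_deriv_aux rexp_neg_injOn_aux, setIntegral_univ]
  refine integral_congr_ae (Filter.Eventually.of_forall fun x => ?_)
  simp only
  rw [abs_neg, abs_of_pos (exp_pos _)]
  exact (smul_aux hτ x).symm

private theorem gfun_cont : Continuous (gfun τ) := by unfold gfun; fun_prop

private theorem gfun_nonneg (u : ℝ) : 0 ≤ gfun τ u := (Real.exp_pos _).le

private theorem gfun_le (hτ : 0 < τ) (u : ℝ) : gfun τ u ≤ Real.exp (τ * Real.log τ - τ) := by
  rw [gfun, Real.exp_le_exp]
  set x := Real.exp (-u) with hx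
  have hx0 : 0 < x := exp_pos _
  have h1 : Real.log (x / τ) ≤ x / τ - 1 := Real.log_le_sub_one_of_pos (div_pos hx0 hτ)
  rw [Real.log_div (ne_of_gt hx0) (ne_of_gt hτ)] at h1
  have h2 : -τ * u = τ * Real.log x := by rw [hx, Real.log_exp]; ring
  have h3 : τ * (Real.log x - Real.log τ) ≤ τ * (x / τ - 1) := by
    exact mul_le_mul_of_nonneg_left h1 hτ.le
  have h4 : τ * (x / τ - 1) = x - τ := by field_simp
  nlinarith

private theorem phi_hasDeriv (τ u : ℝ) :
    HasDerivAt (fun u => -(Real.exp (-u)) - τ * u) (Real.exp (-u) - τ) u := by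
  have h1 : HasDerivAt (fun u : ℝ => Real.exp (-u)) (-Real.exp (-u)) u := by
    simpa [Function.comp_def] using ((Real.hasDerivAt_exp (-u)).comp u (hasDerivAt_neg u))
  have h2 : HasDerivAt (fun u : ℝ => τ * u) τ u := by
    simpa using (hasDerivAt_id u).const_mul τ
  exact (h1.neg.sub h2).congr_deriv (by ring)

private theorem gfun_mono (hτ : 0 < τ) : MonotoneOn (gfun τ) (Iic (-Real.log τ)) := by
  have hφ : MonotoneOn (fun u => -(Real.exp (-u)) - τ * u) (Iic (-Real.log τ)) := by
    refine monotoneOn_of_deriv_nonneg (convex_Iic _) (by fun_prop) ?_ ?_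
    · exact fun u _ => (phi_hasDeriv τ u).differentiableAt.differentiableWithinAt
    · intro u hu
      rw [interior_Iic] at hu
      rw [(phi_hasDeriv τ u).deriv]
      have : τ ≤ Real.exp (-u) := by
        rw [← Real.exp_log hτ, Real.exp_le_exp]
        linarith [hu.out]
      linarith
  exact fun a ha b hb hab => Real.exp_le_exp.2 (hφ ha hb hab)

private theorem gfun_anti (hτ : 0 < τ) : AntitoneOn (gfun τ) (Ici (-Real.log τ)) := by
  have hφ : AntitoneOn (fun u => -(Real.exp (-u)) - τ * u) (Ici (-Real.log τ)) := by
    refine antitoneOn_of_deriv_nonpos (convex_Ici _) (by fun_prop) ?_ ?_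
    · exact fun u _ => (phi_hasDeriv τ u).differentiableAt.differentiableWithinAt
    · intro u hu
      rw [interior_Ici] at hu
      rw [(phi_hasDeriv τ u).deriv]
      have : Real.exp (-u) ≤ τ := by
        rw [← Real.exp_log hτ, Real.exp_le_exp]
        linarith [hu.out]
      linarith
  exact fun a ha b hb hab => Real.exp_le_exp.2 (hφ ha hb hab)

private noncomputable def ffun (τ : ℝ) : ℝ → ℝ :=
  fun t => Real.exp (-(2:ℝ) ^ (-t)) * (2:ℝ) ^ (-(τ * t))

private theorem ffun_eq (τ t : ℝ) : ffun τ t = gfun τ (Real.log 2 * t) := by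
  rw [ffun, gfun, Real.rpow_def_of_pos (by norm_num : (0:ℝ) < 2),
    Real.rpow_def_of_pos (by norm_num : (0:ℝ) < 2), ← Real.exp_add]
  congr 1
  ring

private theorem log2_pos : (0:ℝ) < Real.log 2 := Real.log_pos (by norm_num)

private theorem ffun_integrable (hτ : 0 < τ) : Integrable (ffun τ) := by
  have := (gfun_integrable hτ).comp_mul_left' (ne_of_gt log2_pos)
  exact this.congr (Filter.Eventually.of_forall fun t => (ffun_eq τ t).symm)

private theorem ffun_integral (hτ : 0 < τ) : ∫ t, ffun τ t = Real.Gamma τ / Real.log 2 := by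
  have h : ∫ t, ffun τ t = ∫ t, gfun τ (Real.log 2 * t) :=
    integral_congr_ae (Filter.Eventually.of_forall fun t => ffun_eq τ t)
  rw [h, MeasureTheory.Measure.integral_comp_mul_left (gfun τ) (Real.log 2), gfun_integral hτ,
    abs_of_pos (inv_pos.2 log2_pos), smul_eq_mul, inv_mul_eq_div]

private theorem ffun_cont : Continuous (ffun τ) := by
  have : Continuous fun t : ℝ => gfun τ (Real.log 2 * t) := gfun_cont.comp (by fun_prop)
  exact this.congr fun t => (ffun_eq τ t).symm

private theorem ffun_nonneg (t : ℝ) : 0 ≤ ffun τ t := by rw [ffun_eq]; exact gfun_nonneg _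

private theorem ffun_le (hτ : 0 < τ) (t : ℝ) : ffun τ t ≤ Real.exp (τ * Real.log τ - τ) := by
  rw [ffun_eq]; exact gfun_le hτ _

private theorem ffun_mono (hτ : 0 < τ) :
    MonotoneOn (ffun τ) (Iic (-Real.log τ / Real.log 2)) := by
  intro a ha b hb hab
  rw [ffun_eq, ffun_eq]
  have ha' : Real.log 2 * a ≤ -Real.log τ := by
    rw [mul_comm, ← le_div_iff₀ log2_pos]; exact ha
  have hb' : Real.log 2 * b ≤ -Real.log τ := by
    rw [mul_comm, ← le_div_iff₀ log2_pos]; exact hb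
  exact gfun_mono hτ ha' hb' (by nlinarith [log2_pos])

private theorem ffun_anti (hτ : 0 < τ) :
    AntitoneOn (ffun τ) (Ici (-Real.log τ / Real.log 2)) := by
  intro a ha b hb hab
  rw [ffun_eq, ffun_eq]
  have ha' : -Real.log τ ≤ Real.log 2 * a := by
    rw [mul_comm, ← div_le_iff₀ log2_pos]; exact ha
  have hb' : -Real.log τ ≤ Real.log 2 * b := by
    rw [mul_comm, ← div_le_iff₀ log2_pos]; exact hb
  exact gfun_anti hτ ha' hb' (by nlinarith [log2_pos])

end Aux


private theorem Icc_eq_Ico_int (a b : ℤ) : Finset.Icc a b = Finset.Ico a (b + 1) := by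
  ext i; simp only [Finset.mem_Icc, Finset.mem_Ico]; omega

private theorem sum_Ico_consec_int (F : ℤ → ℝ) {a b c : ℤ} (hab : a ≤ b) (hbc : b ≤ c) :
    ((∑ i ∈ Finset.Ico a b, F i) + ∑ i ∈ Finset.Ico b c, F i) = ∑ i ∈ Finset.Ico a c, F i :=
  Finset.Ico_union_Ico_eq_Ico hab hbc ▸
    Eq.symm (Finset.sum_union (Finset.Ico_disjoint_Ico_consecutive a b c))

private theorem sum_Icc_int (F : ℤ → ℝ) (a : ℤ) (n : ℕ) :
    ∑ i ∈ Finset.Icc a (a + n), F i = ∑ j ∈ Finset.range (n + 1), F (a + j) := by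
  refine Finset.sum_nbij' (fun i => (i - a).toNat) (fun j => a + j) ?_ ?_ ?_ ?_ ?_
  · simp only [Finset.mem_Icc, Finset.mem_range]; intros; omega
  · simp only [Finset.mem_Icc, Finset.mem_range]; intros; omega
  · simp only [Finset.mem_Icc]; intros; omega
  · simp only [Finset.mem_range]; intros; omega
  · simp only [Finset.mem_Icc]; intro i hi; congr 1; omega

private theorem sum_Icc_shift (F : ℤ → ℝ) (a b : ℤ) :
    ∑ i ∈ Finset.Icc a b, F (i - 1) = ∑ i ∈ Finset.Icc (a - 1) (b - 1), F i := by
  refine Finset.sum_nbij' (fun i => i - 1) (fun i => i + 1) ?_ ?_ ?_ ?_ ?_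
  · simp only [Finset.mem_Icc]; intros; omega
  · simp only [Finset.mem_Icc]; intros; omega
  · intros; omega
  · intros; omega
  · intros; rfl

private theorem master (g : ℝ → ℝ) (hc : Continuous g) (h0 : ∀ x, 0 ≤ g x)
    (hint : Integrable g) (p M : ℝ) (hM : ∀ x, g x ≤ M)
    (hmono : MonotoneOn g (Set.Iic p)) (hanti : AntitoneOn g (Set.Ici p))
    (δ c : ℝ) (hδ : 0 < δ) :
    Summable (fun i : ℤ => g (c + i * δ)) ∧
    δ * (∑' i : ℤ, g (c + i * δ)) ≤ (∫ x, g x) + 2 * (δ * M) ∧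
    (∫ x, g x) - δ * M ≤ δ * (∑' i : ℤ, g (c + i * δ)) := by
  set t : ℤ → ℝ := fun i => c + i * δ with ht
  set k : ℤ := ⌈(p - c) / δ⌉ with hk
  have htmono : ∀ {i j : ℤ}, i ≤ j → t i ≤ t j := by
    intro i j hij
    simp only [ht]
    have h1 : (i:ℝ) ≤ j := by exact_mod_cast hij
    nlinarith
  have htk : p ≤ t k := by
    have h1 := Int.le_ceil ((p - c) / δ)
    rw [div_le_iff₀ hδ] at h1
    simp only [ht, hk]; linarith
  have htk1 : t (k - 1) ≤ p := by
    have h1 := Int.ceil_lt_add_one ((p - c) / δ)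
    have h2 : ((k:ℝ) - 1) * δ ≤ p - c := by
      have h3 : ((k:ℝ) - 1) ≤ (p - c) / δ := by rw [hk]; push_cast; linarith
      calc ((k:ℝ) - 1) * δ ≤ ((p - c) / δ) * δ := by nlinarith
        _ = p - c := div_mul_cancel₀ _ (ne_of_gt hδ)
    simp only [ht]; push_cast; linarith
  have hIcc : ∀ a b : ℝ, IntervalIntegrable g volume a b := fun a b => hc.intervalIntegrable a b
  have hstep : ∀ i : ℤ, t (i + 1) - t i = δ := by
    intro i; simp only [ht]; push_cast; ring
  have step_lo : ∀ (i : ℤ) (v : ℝ), (∀ x ∈ Set.Icc (t i) (t (i + 1)), v ≤ g x) →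
      δ * v ≤ ∫ x in t i..t (i + 1), g x := by
    intro i v hv
    have hle : t i ≤ t (i + 1) := htmono (by omega)
    have h1 := intervalIntegral.integral_mono_on (f := fun _ => v) (g := g)
      hle (intervalIntegrable_const) (hIcc _ _) hv
    rw [intervalIntegral.integral_const, smul_eq_mul, hstep i] at h1
    linarith
  have step_hi : ∀ (i : ℤ) (v : ℝ), (∀ x ∈ Set.Icc (t i) (t (i + 1)), g x ≤ v) →
      (∫ x in t i..t (i + 1), g x) ≤ δ * v := by
    intro i v hv
    have hle : t i ≤ t (i + 1) := htmono (by omega)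
    have h1 := intervalIntegral.integral_mono_on (f := g) (g := fun _ => v)
      hle (hIcc _ _) (intervalIntegrable_const) hv
    rw [intervalIntegral.integral_const, smul_eq_mul, hstep i] at h1
    linarith
  have int_nonneg : ∀ a b : ℝ, a ≤ b → 0 ≤ ∫ x in a..b, g x := by
    intro a b hab
    exact intervalIntegral.integral_nonneg hab (fun x _ => h0 x)
  have int_le : ∀ a b : ℝ, (∫ x in a..b, g x) ≤ ∫ x, g x := by
    intro a b
    rcases le_total a b with hab | hab
    · rw [intervalIntegral.integral_of_le hab]
      exact setIntegral_le_integral hint (Filter.Eventually.of_forall fun x => h0 x)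
    · rw [intervalIntegral.integral_of_ge hab]
      have h2 : 0 ≤ ∫ x in Set.Ioc b a, g x :=
        setIntegral_nonneg measurableSet_Ioc (fun x _ => h0 x)
      have h3 : 0 ≤ ∫ x, g x := integral_nonneg h0
      linarith
  have tele : ∀ a b : ℤ, a ≤ b →
      ∑ i ∈ Finset.Icc a b, (∫ x in t i..t (i + 1), g x) = ∫ x in t a..t (b + 1), g x := by
    intro a b hab
    obtain ⟨n, rfl⟩ : ∃ n : ℕ, b = a + n := ⟨(b - a).toNat, by omega⟩
    rw [sum_Icc_int]
    have h1 := intervalIntegral.sum_integral_adjacent_intervals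
      (μ := volume) (f := g) (a := fun j : ℕ => t (a + j)) (n := n + 1) (fun k _ => hIcc _ _)
    have h2 : ∀ j ∈ Finset.range (n + 1),
        (∫ x in t (a + (j:ℤ))..t (a + (j:ℤ) + 1), g x)
          = ∫ x in t (a + (j:ℤ))..t (a + ((j:ℤ) + 1)), g x := by
      intro j _; congr 2; ring
    rw [Finset.sum_congr rfl h2]
    have h3 : ∀ j : ℕ, t (a + (j:ℤ) + 1) = t (a + ((j + 1 : ℕ) : ℤ)) := by
      intro j; congr 1; push_cast; ring
    calc ∑ j ∈ Finset.range (n + 1), ∫ x in t (a + (j:ℤ))..t (a + ((j:ℤ) + 1)), g x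
        = ∫ x in t (a + (0:ℕ))..t (a + ((n + 1 : ℕ) : ℤ)), g x := by
          rw [← h1]; refine Finset.sum_congr rfl (fun j _ => ?_); congr 2 <;> push_cast <;> ring
      _ = ∫ x in t a..t (a + n + 1), g x := by congr 2 <;> push_cast <;> ring_nf
  have shift_sum : ∀ (a b : ℤ),
      ∑ i ∈ Finset.Icc a b, δ * g (t i)
        = ∑ j ∈ Finset.Icc (a - 1) (b - 1), δ * g (t (j + 1)) := by
    intro a b
    rw [← sum_Icc_shift (fun j => δ * g (t (j + 1))) a b]
    refine Finset.sum_congr rfl (fun i _ => ?_)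
    have h : i - 1 + 1 = i := by omega
    rw [h]
  have block_mono : ∀ a b : ℤ, a ≤ b → t b ≤ p →
      ∑ i ∈ Finset.Icc a (b - 1), δ * g (t i) ≤ ∫ x in t a..t b, g x := by
    intro a b hab htb
    rcases eq_or_lt_of_le hab with rfl | hlt
    · rw [Finset.Icc_eq_empty (by omega), Finset.sum_empty]
      exact int_nonneg _ _ le_rfl
    · have h1 : ∀ i ∈ Finset.Icc a (b - 1), δ * g (t i) ≤ ∫ x in t i..t (i + 1), g x := by
        intro i hi
        rw [Finset.mem_Icc] at hi
        refine step_lo i (g (t i)) (fun x hx => ?_)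
        have hx1 : t i ≤ x := hx.1
        have hx2 : x ≤ t (i + 1) := hx.2
        have hxp : x ≤ p := le_trans hx2 (le_trans (htmono (by omega)) htb)
        exact hmono (le_trans hx1 hxp) hxp hx1
      calc ∑ i ∈ Finset.Icc a (b - 1), δ * g (t i)
          ≤ ∑ i ∈ Finset.Icc a (b - 1), ∫ x in t i..t (i + 1), g x := Finset.sum_le_sum h1
        _ = ∫ x in t a..t (b - 1 + 1), g x := tele a (b - 1) (by omega)
        _ = ∫ x in t a..t b, g x := by congr 2; omega
  have block_anti : ∀ a b : ℤ, a ≤ b → p ≤ t a →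
      ∑ i ∈ Finset.Icc (a + 1) b, δ * g (t i) ≤ ∫ x in t a..t b, g x := by
    intro a b hab hta
    rcases eq_or_lt_of_le hab with rfl | hlt
    · rw [Finset.Icc_eq_empty (by omega), Finset.sum_empty]
      exact int_nonneg _ _ le_rfl
    · rw [shift_sum]
      have h1 : ∀ j ∈ Finset.Icc (a + 1 - 1) (b - 1),
          δ * g (t (j + 1)) ≤ ∫ x in t j..t (j + 1), g x := by
        intro j hj
        rw [Finset.mem_Icc] at hj
        refine step_lo j (g (t (j + 1))) (fun x hx => ?_)
        have hx1 : t j ≤ x := hx.1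
        have hx2 : x ≤ t (j + 1) := hx.2
        have hxp : p ≤ x := le_trans (le_trans hta (htmono (by omega))) hx1
        exact hanti hxp (le_trans hxp hx2) hx2
      calc ∑ j ∈ Finset.Icc (a + 1 - 1) (b - 1), δ * g (t (j + 1))
          ≤ ∑ j ∈ Finset.Icc (a + 1 - 1) (b - 1), ∫ x in t j..t (j + 1), g x :=
            Finset.sum_le_sum h1
        _ = ∑ j ∈ Finset.Icc a (b - 1), ∫ x in t j..t (j + 1), g x := by norm_num
        _ = ∫ x in t a..t (b - 1 + 1), g x := tele a (b - 1) (by omega)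
        _ = ∫ x in t a..t b, g x := by congr 2; omega
  have block_mono_lower : ∀ a b : ℤ, a ≤ b → t b ≤ p →
      (∫ x in t (a - 1)..t b, g x) ≤ ∑ i ∈ Finset.Icc a b, δ * g (t i) := by
    intro a b hab htb
    rw [shift_sum]
    have h1 : ∀ j ∈ Finset.Icc (a - 1) (b - 1),
        (∫ x in t j..t (j + 1), g x) ≤ δ * g (t (j + 1)) := by
      intro j hj
      rw [Finset.mem_Icc] at hj
      refine step_hi j (g (t (j + 1))) (fun x hx => ?_)
      have hx1 : t j ≤ x := hx.1
      have hx2 : x ≤ t (j + 1) := hx.2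
      have hj1p : t (j + 1) ≤ p := le_trans (htmono (by omega)) htb
      exact hmono (le_trans hx2 hj1p) hj1p hx2
    calc (∫ x in t (a - 1)..t b, g x)
        = ∫ x in t (a - 1)..t (b - 1 + 1), g x := by congr 2; omega
      _ = ∑ j ∈ Finset.Icc (a - 1) (b - 1), ∫ x in t j..t (j + 1), g x :=
          (tele (a - 1) (b - 1) (by omega)).symm
      _ ≤ ∑ j ∈ Finset.Icc (a - 1) (b - 1), δ * g (t (j + 1)) := Finset.sum_le_sum h1
  have block_anti_lower : ∀ a b : ℤ, a ≤ b → p ≤ t a →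
      (∫ x in t a..t (b + 1), g x) ≤ ∑ i ∈ Finset.Icc a b, δ * g (t i) := by
    intro a b hab hta
    have h1 : ∀ i ∈ Finset.Icc a b, (∫ x in t i..t (i + 1), g x) ≤ δ * g (t i) := by
      intro i hi
      rw [Finset.mem_Icc] at hi
      refine step_hi i (g (t i)) (fun x hx => ?_)
      have hx1 : t i ≤ x := hx.1
      have hip : p ≤ t i := le_trans hta (htmono (by omega))
      exact hanti hip (le_trans hip hx1) hx1
    calc (∫ x in t a..t (b + 1), g x)
        = ∑ i ∈ Finset.Icc a b, ∫ x in t i..t (i + 1), g x := (tele a b hab).symm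
      _ ≤ ∑ i ∈ Finset.Icc a b, δ * g (t i) := Finset.sum_le_sum h1
  have adj : ∀ a b c' : ℝ, (∫ x in a..b, g x) + (∫ x in b..c', g x) = ∫ x in a..c', g x := by
    intro a b c'
    exact intervalIntegral.integral_add_adjacent_intervals (hIcc _ _) (hIcc _ _)
  have key_upper : ∀ u : Finset ℤ, ∑ i ∈ u, δ * g (t i) ≤ (∫ x, g x) + 2 * (δ * M) := by
    intro u
    set a : ℤ := ((insert (k - 1) u).min' (Finset.insert_nonempty _ _)) with ha
    set b : ℤ := ((insert k u).max' (Finset.insert_nonempty _ _)) with hb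
    have hak : a ≤ k - 1 := Finset.min'_le _ _ (Finset.mem_insert_self _ _)
    have hbk : k ≤ b := Finset.le_max' _ _ (Finset.mem_insert_self _ _)
    have hsub : u ⊆ Finset.Icc a b := by
      intro i hi
      rw [Finset.mem_Icc]
      exact ⟨Finset.min'_le _ _ (Finset.mem_insert_of_mem hi),
        Finset.le_max' _ _ (Finset.mem_insert_of_mem hi)⟩
    have h1 : ∑ i ∈ u, δ * g (t i) ≤ ∑ i ∈ Finset.Icc a b, δ * g (t i) :=
      Finset.sum_le_sum_of_subset_of_nonneg hsub
        (fun i _ _ => mul_nonneg hδ.le (h0 _))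
    have hsplit : ∑ i ∈ Finset.Icc a b, δ * g (t i)
        = (∑ i ∈ Finset.Icc a (k - 2), δ * g (t i))
          + (∑ i ∈ Finset.Icc (k - 1) k, δ * g (t i))
          + (∑ i ∈ Finset.Icc (k + 1) b, δ * g (t i)) := by
      rw [Icc_eq_Ico_int a b, Icc_eq_Ico_int a (k - 2), Icc_eq_Ico_int (k - 1) k,
        Icc_eq_Ico_int (k + 1) b]
      rw [← sum_Ico_consec_int (fun i => δ * g (t i)) (by omega : a ≤ k - 2 + 1)
          (by omega : k - 2 + 1 ≤ b + 1),
        ← sum_Ico_consec_int (fun i => δ * g (t i)) (by omega : k - 2 + 1 ≤ k + 1)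
          (by omega : k + 1 ≤ b + 1)]
      have e1 : k - 1 = k - 2 + 1 := by omega
      have e2 : k + 1 = k + 1 := rfl
      rw [e1]
      ring
    have h2 : ∑ i ∈ Finset.Icc a (k - 2), δ * g (t i) ≤ ∫ x in t a..t (k - 1), g x := by
      have := block_mono a (k - 1) (by omega) htk1
      have e : k - 1 - 1 = k - 2 := by omega
      rwa [e] at this
    have h3 : ∑ i ∈ Finset.Icc (k - 1) k, δ * g (t i) ≤ 2 * (δ * M) := by
      have e : Finset.Icc (k - 1) k = {k - 1, k} := by
        have h := Int.Icc_eq_pair (k - 1)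
        have e2 : k - 1 + 1 = k := by omega
        rwa [e2] at h
      rw [e, Finset.sum_pair (by omega : k - 1 ≠ k)]
      have b1 : δ * g (t (k - 1)) ≤ δ * M := mul_le_mul_of_nonneg_left (hM _) hδ.le
      have b2 : δ * g (t k) ≤ δ * M := mul_le_mul_of_nonneg_left (hM _) hδ.le
      linarith
    have h4 : ∑ i ∈ Finset.Icc (k + 1) b, δ * g (t i) ≤ ∫ x in t k..t b, g x :=
      block_anti k b hbk htk
    have h5 : (∫ x in t a..t (k - 1), g x) + (∫ x in t k..t b, g x) ≤ ∫ x, g x := by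
      have hmid : 0 ≤ ∫ x in t (k - 1)..t k, g x := int_nonneg _ _ (htmono (by omega))
      have e1 := adj (t a) (t (k - 1)) (t k)
      have e2 := adj (t a) (t k) (t b)
      have e3 := int_le (t a) (t b)
      linarith
    linarith
  have hsum : Summable (fun i : ℤ => δ * g (t i)) :=
    summable_of_sum_le (fun i => mul_nonneg hδ.le (h0 _)) key_upper
  have hsumg : Summable (fun i : ℤ => g (t i)) := by
    have h1 := hsum.mul_left δ⁻¹
    refine h1.congr (fun i => ?_)
    field_simp
  have htsum : δ * (∑' i : ℤ, g (t i)) = ∑' i : ℤ, δ * g (t i) := (tsum_mul_left).symm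
  have upper : δ * (∑' i : ℤ, g (t i)) ≤ (∫ x, g x) + 2 * (δ * M) := by
    rw [htsum]
    exact Summable.tsum_le_of_sum_le hsum key_upper
  have key_lower : ∀ n : ℕ,
      (∫ x in t (k - (n : ℤ) - 2)..t (k + (n : ℤ) + 1), g x) - δ * M
        ≤ δ * (∑' i : ℤ, g (t i)) := by
    intro n
    have hA : (∫ x in t (k - (n : ℤ) - 2)..t (k - 1), g x)
        ≤ ∑ i ∈ Finset.Icc (k - (n : ℤ) - 1) (k - 1), δ * g (t i) := by
      have h := block_mono_lower (k - (n : ℤ) - 1) (k - 1) (by omega) htk1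
      have e : k - (n : ℤ) - 1 - 1 = k - (n : ℤ) - 2 := by omega
      rwa [e] at h
    have hB : (∫ x in t k..t (k + (n : ℤ) + 1), g x)
        ≤ ∑ i ∈ Finset.Icc k (k + (n : ℤ)), δ * g (t i) := by
      have h := block_anti_lower k (k + (n : ℤ)) (by omega) htk
      have e : k + (n : ℤ) + 1 = k + (n : ℤ) + 1 := rfl
      exact h
    have hsplit : ∑ i ∈ Finset.Icc (k - (n : ℤ) - 1) (k + (n : ℤ)), δ * g (t i)
        = (∑ i ∈ Finset.Icc (k - (n : ℤ) - 1) (k - 1), δ * g (t i))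
          + ∑ i ∈ Finset.Icc k (k + (n : ℤ)), δ * g (t i) := by
      rw [Icc_eq_Ico_int (k - (n : ℤ) - 1) (k + (n : ℤ)),
        Icc_eq_Ico_int (k - (n : ℤ) - 1) (k - 1), Icc_eq_Ico_int k (k + (n : ℤ))]
      rw [← sum_Ico_consec_int (fun i => δ * g (t i))
        (by omega : k - (n : ℤ) - 1 ≤ k - 1 + 1) (by omega : k - 1 + 1 ≤ k + (n : ℤ) + 1)]
      have e : k - 1 + 1 = k := by omega
      rw [e]
    have hmid : (∫ x in t (k - 1)..t k, g x) ≤ δ * M := by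
      have h := step_hi (k - 1) M (fun x _ => hM x)
      have e : k - 1 + 1 = k := by omega
      rwa [e] at h
    have hadj1 := adj (t (k - (n : ℤ) - 2)) (t (k - 1)) (t k)
    have hadj2 := adj (t (k - (n : ℤ) - 2)) (t k) (t (k + (n : ℤ) + 1))
    have hpart : ∑ i ∈ Finset.Icc (k - (n : ℤ) - 1) (k + (n : ℤ)), δ * g (t i)
        ≤ ∑' i : ℤ, δ * g (t i) :=
      Summable.sum_le_tsum _ (fun i _ => mul_nonneg hδ.le (h0 _)) hsum
    rw [htsum]
    linarith
  have lower : (∫ x, g x) - δ * M ≤ δ * (∑' i : ℤ, g (t i)) := by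
    have hbot : Tendsto (fun n : ℕ => t (k - (n : ℤ) - 2)) atTop atBot := by
      have e : (fun n : ℕ => t (k - (n : ℤ) - 2))
          = fun n : ℕ => (c + ((k : ℝ) - 2) * δ) + -((n : ℝ) * δ) := by
        funext n; simp only [ht]; push_cast; ring
      rw [e]
      exact tendsto_atBot_add_const_left _ _
        (tendsto_neg_atBot_iff.mpr ((tendsto_natCast_atTop_atTop).atTop_mul_const hδ))
    have htop : Tendsto (fun n : ℕ => t (k + (n : ℤ) + 1)) atTop atTop := by
      have e : (fun n : ℕ => t (k + (n : ℤ) + 1))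
          = fun n : ℕ => (c + ((k : ℝ) + 1) * δ) + (n : ℝ) * δ := by
        funext n; simp only [ht]; push_cast; ring
      rw [e]
      exact tendsto_atTop_add_const_left _ _
        ((tendsto_natCast_atTop_atTop).atTop_mul_const hδ)
    have hlim : Tendsto (fun n : ℕ =>
        (∫ x in t (k - (n : ℤ) - 2)..t (k + (n : ℤ) + 1), g x) - δ * M) atTop
        (nhds ((∫ x, g x) - δ * M)) :=
      (intervalIntegral_tendsto_integral hint hbot htop).sub_const _
    exact le_of_tendsto' hlim key_lower
  refine ⟨hsumg, upper, lower⟩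


open MeasureTheory Set in
/-- Limiting mean of the τ-GRA of a uniformly-offset PCSA sketch. -/
theorem tGRA_pcsa_mean_limit (τ : ℝ) (hτ : 0 < τ) :
    (∀ m : ℕ, 0 < m → Summable (fun i : ℤ =>
      Real.exp (-(2:ℝ) ^ (-((i:ℝ) / (m:ℝ) + Real.logb 2 (m:ℝ)))) *
        (2:ℝ) ^ (-(τ * ((i:ℝ) / (m:ℝ) + Real.logb 2 (m:ℝ)))))) ∧
    Tendsto (fun m : ℕ => (m:ℝ)⁻¹ * ∑' i : ℤ,
        Real.exp (-(2:ℝ) ^ (-((i:ℝ) / (m:ℝ) + Real.logb 2 (m:ℝ)))) *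
          (2:ℝ) ^ (-(τ * ((i:ℝ) / (m:ℝ) + Real.logb 2 (m:ℝ)))))
      atTop (nhds (Real.Gamma τ / Real.log 2)) := by
  set M : ℝ := Real.exp (τ * Real.log τ - τ) with hMdef
  have hM0 : 0 ≤ M := (Real.exp_pos _).le
  have hfun : ∀ m : ℕ, (fun i : ℤ =>
      Real.exp (-(2:ℝ) ^ (-((i:ℝ) / (m:ℝ) + Real.logb 2 (m:ℝ)))) *
        (2:ℝ) ^ (-(τ * ((i:ℝ) / (m:ℝ) + Real.logb 2 (m:ℝ)))))
      = (fun i : ℤ => ffun τ (Real.logb 2 (m:ℝ) + (i:ℝ) * ((m:ℝ))⁻¹)) := by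
    intro m
    funext i
    have harg : (i:ℝ) / (m:ℝ) + Real.logb 2 (m:ℝ)
        = Real.logb 2 (m:ℝ) + (i:ℝ) * ((m:ℝ))⁻¹ := by ring
    simp only [ffun, harg]
  have hmaster : ∀ m : ℕ, 0 < m →
      Summable (fun i : ℤ => ffun τ (Real.logb 2 (m:ℝ) + (i:ℝ) * ((m:ℝ))⁻¹)) ∧
      ((m:ℝ))⁻¹ * (∑' i : ℤ, ffun τ (Real.logb 2 (m:ℝ) + (i:ℝ) * ((m:ℝ))⁻¹))
        ≤ Real.Gamma τ / Real.log 2 + 2 * (((m:ℝ))⁻¹ * M) ∧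
      Real.Gamma τ / Real.log 2 - ((m:ℝ))⁻¹ * M
        ≤ ((m:ℝ))⁻¹ * (∑' i : ℤ, ffun τ (Real.logb 2 (m:ℝ) + (i:ℝ) * ((m:ℝ))⁻¹)) := by
    intro m hm
    have hδ : (0:ℝ) < ((m:ℝ))⁻¹ := inv_pos.2 (by exact_mod_cast hm)
    have h := master (ffun τ) ffun_cont (fun x => ffun_nonneg x) (ffun_integrable hτ)
      (-Real.log τ / Real.log 2) M (fun x => ffun_le hτ x) (ffun_mono hτ) (ffun_anti hτ)
      ((m:ℝ))⁻¹ (Real.logb 2 (m:ℝ)) hδ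
    rwa [ffun_integral hτ] at h
  constructor
  · intro m hm
    rw [hfun m]
    exact (hmaster m hm).1
  · have hlow : Tendsto (fun m : ℕ => Real.Gamma τ / Real.log 2 - ((m:ℝ))⁻¹ * M) atTop
        (nhds (Real.Gamma τ / Real.log 2)) := by
      have h : Tendsto (fun _ : ℕ => Real.Gamma τ / Real.log 2) atTop
          (nhds (Real.Gamma τ / Real.log 2)) := tendsto_const_nhds
      have h2 := (tendsto_inv_atTop_nhds_zero_nat (𝕜 := ℝ)).mul_const M
      simpa using h.sub h2
    have hhigh : Tendsto (fun m : ℕ => Real.Gamma τ / Real.log 2 + 2 * (((m:ℝ))⁻¹ * M)) atTop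
        (nhds (Real.Gamma τ / Real.log 2)) := by
      have h : Tendsto (fun _ : ℕ => Real.Gamma τ / Real.log 2) atTop
          (nhds (Real.Gamma τ / Real.log 2)) := tendsto_const_nhds
      have h2 := ((tendsto_inv_atTop_nhds_zero_nat (𝕜 := ℝ)).mul_const M).const_mul (2:ℝ)
      simpa using h.add h2
    refine tendsto_of_tendsto_of_tendsto_of_le_of_le' hlow hhigh ?_ ?_
    · filter_upwards [eventually_ge_atTop 1] with m hm
      rw [hfun m]
      exact (hmaster m hm).2.2
    · filter_upwards [eventually_ge_atTop 1] with m hm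
      rw [hfun m]
      exact (hmaster m hm).2.1
end

section
/- Fix τ > 0. For each positive integer m and each integer i, let s(m,i) = i/m + log₂ m. Then the sums Σ_{i∈ℤ} (exp(-2^{-s(m,i)}) - exp(-2·2^{-s(m,i)})) · 2^{-2τ·s(m,i)} converge for every m, and lim_{m→∞} (1/m) · Σ_{i∈ℤ} (exp(-2^{-s(m,i)}) - exp(-2·2^{-s(m,i)})) · 2^{-2τ·s(m,i)} = (1 - 2^{-2τ}) · Γ(2τ) / log 2. -/
open Real Filter

open MeasureTheory Set


lemma rpow2_exp (y : ℝ) : (2:ℝ)^y = Real.exp (Real.log 2 * y) :=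
  Real.rpow_def_of_pos (by norm_num) y

noncomputable def pcsaF (τ s : ℝ) : ℝ :=
  (Real.exp (-(2:ℝ)^(-s)) - Real.exp (-(2*(2:ℝ)^(-s)))) * (2:ℝ)^(-(2*τ*s))

lemma pcsaF_nonneg (τ s : ℝ) : 0 ≤ pcsaF τ s := by
  unfold pcsaF
  have h : Real.exp (-(2*(2:ℝ)^(-s))) ≤ Real.exp (-(2:ℝ)^(-s)) := by
    apply Real.exp_le_exp.2
    nlinarith [Real.rpow_pos_of_pos (by norm_num : (0:ℝ) < 2) (-s)]
  have := Real.rpow_nonneg (by norm_num : (0:ℝ) ≤ 2) (-(2*τ*s))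
  nlinarith

lemma pcsaF_continuous (τ : ℝ) : Continuous (pcsaF τ) := by
  unfold pcsaF
  simp only [rpow2_exp]
  fun_prop

lemma pcsaF_bound1 (τ s : ℝ) : pcsaF τ s ≤ (2:ℝ)^(-(2*τ*s)) := by
  unfold pcsaF
  have h1 : Real.exp (-(2:ℝ)^(-s)) - Real.exp (-(2*(2:ℝ)^(-s))) ≤ 1 := by
    have h2 : Real.exp (-(2:ℝ)^(-s)) ≤ 1 :=
      Real.exp_le_one_iff.2 (neg_nonpos.2 (Real.rpow_nonneg (by norm_num) _))
    have h3 : 0 < Real.exp (-(2*(2:ℝ)^(-s))) := Real.exp_pos _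
    linarith
  have h4 : (0:ℝ) ≤ (2:ℝ)^(-(2*τ*s)) := Real.rpow_nonneg (by norm_num) _
  nlinarith [Real.exp_le_exp.2 (show -(2*(2:ℝ)^(-s)) ≤ -(2:ℝ)^(-s) by
    nlinarith [Real.rpow_pos_of_pos (by norm_num : (0:ℝ) < 2) (-s)])]

-- x^(2τ) ≤ C exp(x/2) for x > 0
lemma rpow_le_C_exp (τ : ℝ) (hτ : 0 < τ) {x : ℝ} (hx : 0 < x) :
    x ^ (2*τ) ≤ ((4*τ)^(2*τ) * Real.exp (-(2*τ))) * Real.exp (x/2) := by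
  have h4τ : (0:ℝ) < 4*τ := by linarith
  have hlog : Real.log (x / (4*τ)) ≤ x/(4*τ) - 1 :=
    Real.log_le_sub_one_of_pos (by positivity)
  have hlx : Real.log x ≤ x/(4*τ) - 1 + Real.log (4*τ) := by
    rw [Real.log_div (ne_of_gt hx) (ne_of_gt h4τ)] at hlog
    linarith
  have key : 2*τ * Real.log x ≤ x/2 - 2*τ + 2*τ * Real.log (4*τ) := by
    have := mul_le_mul_of_nonneg_left hlx (by linarith : (0:ℝ) ≤ 2*τ)
    have h2 : 2*τ*(x/(4*τ)) = x/2 := by field_simp; ring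
    nlinarith
  calc x ^ (2*τ) = Real.exp (2*τ * Real.log x) := by
        rw [Real.rpow_def_of_pos hx, mul_comm]
    _ ≤ Real.exp (x/2 - 2*τ + 2*τ * Real.log (4*τ)) := Real.exp_le_exp.2 key
    _ = ((4*τ)^(2*τ) * Real.exp (-(2*τ))) * Real.exp (x/2) := by
        rw [Real.rpow_def_of_pos h4τ, ← Real.exp_add, ← Real.exp_add]
        ring_nf

lemma two_rpow_eq (s : ℝ) (c : ℝ) : (2:ℝ)^(-(c*s)) = ((2:ℝ)^(-s))^c := by
  rw [← Real.rpow_mul (by norm_num : (0:ℝ) ≤ 2)]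
  ring_nf

lemma pcsaF_bound2 (τ : ℝ) (hτ : 0 < τ) (s : ℝ) :
    pcsaF τ s ≤ ((4*τ)^(2*τ) * Real.exp (-(2*τ))) * (2:ℝ)^(s/2) := by
  set C := (4*τ)^(2*τ) * Real.exp (-(2*τ)) with hC
  have hCpos : 0 < C := by positivity
  set x := (2:ℝ)^(-s) with hxdef
  have hx : 0 < x := Real.rpow_pos_of_pos (by norm_num) _
  have hrw : pcsaF τ s = (Real.exp (-x) - Real.exp (-(2*x))) * x^(2*τ) := by
    unfold pcsaF
    rw [two_rpow_eq s (2*τ)]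
  have h2 : Real.exp (-x) - Real.exp (-(2*x)) ≤ Real.exp (-x) := by
    have := Real.exp_pos (-(2*x)); linarith
  have h2' : 0 ≤ Real.exp (-x) - Real.exp (-(2*x)) := by
    have := Real.exp_le_exp.2 (show -(2*x) ≤ -x by linarith); linarith
  have h3 := rpow_le_C_exp τ hτ hx
  have h5 : pcsaF τ s ≤ C * Real.exp (-(x/2)) := by
    rw [hrw]
    calc (Real.exp (-x) - Real.exp (-(2*x))) * x^(2*τ)
        ≤ Real.exp (-x) * (C * Real.exp (x/2)) := by
          apply mul_le_mul h2 h3 (Real.rpow_nonneg hx.le _) (Real.exp_pos _).le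
      _ = C * Real.exp (-(x/2)) := by
          rw [show Real.exp (-x) * (C * Real.exp (x/2)) = C * (Real.exp (-x) * Real.exp (x/2)) by ring,
             ← Real.exp_add, show -x + x/2 = -(x/2) by ring]
  have h4 : Real.exp (-(x/2)) ≤ (2:ℝ)^(s/2) := by
    rw [rpow2_exp]
    apply Real.exp_le_exp.2
    have hxval : x = Real.exp (-(Real.log 2 * s)) := by
      rw [hxdef, rpow2_exp]; ring_nf
    have := Real.add_one_le_exp (-(Real.log 2 * s))
    rw [← hxval] at this
    nlinarith
  calc pcsaF τ s ≤ C * Real.exp (-(x/2)) := h5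
    _ ≤ C * (2:ℝ)^(s/2) := by nlinarith




lemma integrableOn_exp_mul_Iic' (a c : ℝ) (ha : 0 < a) :
    IntegrableOn (fun t : ℝ => Real.exp (a * t)) (Iic c) := by
  exact integrableOn_exp_mul_Iic ha c

noncomputable def pcsaB (τ t : ℝ) : ℝ :=
  min ((2:ℝ)^(2*τ) * (2:ℝ)^(-(2*τ*t))) (((4*τ)^(2*τ) * Real.exp (-(2*τ))) * (2:ℝ)^(t/2))

lemma pcsaB_continuous (τ : ℝ) : Continuous (pcsaB τ) := by
  unfold pcsaB
  simp only [Real.rpow_def_of_pos (show (0:ℝ) < 2 by norm_num)]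
  fun_prop

lemma pcsaB_integrable (τ : ℝ) (hτ : 0 < τ) : Integrable (pcsaB τ) := by
  have hmeas : AEStronglyMeasurable (pcsaB τ) volume :=
    (pcsaB_continuous τ).aestronglyMeasurable
  have hnn : ∀ t, 0 ≤ pcsaB τ t := by
    intro t
    apply le_min <;> positivity
  rw [← integrableOn_univ, ← Set.Iic_union_Ioi (a := (0:ℝ))]
  apply IntegrableOn.union
  · apply Integrable.mono' (g := fun t => ((4*τ)^(2*τ) * Real.exp (-(2*τ))) * Real.exp ((Real.log 2 / 2) * t))
    · exact (integrableOn_exp_mul_Iic' _ _ (by positivity)).const_mul _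
    · exact hmeas.restrict
    · filter_upwards with t
      rw [Real.norm_of_nonneg (hnn t)]
      calc pcsaB τ t ≤ ((4*τ)^(2*τ) * Real.exp (-(2*τ))) * (2:ℝ)^(t/2) := min_le_right _ _
        _ = ((4*τ)^(2*τ) * Real.exp (-(2*τ))) * Real.exp ((Real.log 2 / 2) * t) := by
            simp only [rpow2_exp]; ring_nf
  · apply Integrable.mono' (g := fun t => (2:ℝ)^(2*τ) * Real.exp (-(2*τ*Real.log 2) * t))
    · exact (exp_neg_integrableOn_Ioi _ (by positivity)).const_mul _
    · exact hmeas.restrict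
    · filter_upwards with t
      rw [Real.norm_of_nonneg (hnn t)]
      calc pcsaB τ t ≤ (2:ℝ)^(2*τ) * (2:ℝ)^(-(2*τ*t)) := min_le_left _ _
        _ = (2:ℝ)^(2*τ) * Real.exp (-(2*τ*Real.log 2) * t) := by
            simp only [rpow2_exp]; ring_nf




section stepA
variable (τ : ℝ) (m : ℕ) (c : ℝ)

noncomputable def pcsaφ (t : ℝ) : ℤ := ⌊(m:ℝ) * (t - c)⌋

noncomputable def pcsaG (t : ℝ) : ℝ := pcsaF τ ((pcsaφ m c t : ℝ)/(m:ℝ) + c)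

lemma pcsaA_eq (hm : 0 < m) (i : ℤ) :
    pcsaφ m c ⁻¹' {i} = Ico (c + (i:ℝ)/m) (c + ((i:ℝ)+1)/m) := by
  have hm' : (0:ℝ) < m := Nat.cast_pos.2 hm
  ext t
  simp only [mem_preimage, mem_singleton_iff, pcsaφ, Int.floor_eq_iff, mem_Ico]
  constructor
  · rintro ⟨h1, h2⟩
    have hb1 : (i:ℝ)/m ≤ t - c := (div_le_iff₀ hm').2 (by nlinarith)
    have hb2 : t - c < ((i:ℝ)+1)/m := (lt_div_iff₀ hm').2 (by push_cast at h2 ⊢; nlinarith)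
    constructor <;> linarith
  · rintro ⟨h1, h2⟩
    have hb1 : (i:ℝ) ≤ (t-c)*m := (div_le_iff₀ hm').1 (by linarith)
    have hb2 : t - c < ((i:ℝ)+1)/m := by linarith
    have hb2' : (t-c)*m < (i:ℝ)+1 := (lt_div_iff₀ hm').1 hb2
    constructor
    · nlinarith
    · push_cast; nlinarith


lemma pcsaF_le_pcsaB (τ : ℝ) (hτ : 0 < τ) {s t : ℝ} (h1 : t - 1 ≤ s) (h2 : s ≤ t) :
    pcsaF τ s ≤ pcsaB τ t := by
  apply le_min
  · calc pcsaF τ s ≤ (2:ℝ)^(-(2*τ*s)) := pcsaF_bound1 τ s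
      _ ≤ (2:ℝ)^(2*τ + -(2*τ*t)) := by
          apply Real.rpow_le_rpow_of_exponent_le (by norm_num)
          nlinarith
      _ = (2:ℝ)^(2*τ) * (2:ℝ)^(-(2*τ*t)) := Real.rpow_add (by norm_num) _ _
  · calc pcsaF τ s ≤ ((4*τ)^(2*τ) * Real.exp (-(2*τ))) * (2:ℝ)^(s/2) := pcsaF_bound2 τ hτ s
      _ ≤ ((4*τ)^(2*τ) * Real.exp (-(2*τ))) * (2:ℝ)^(t/2) := by
          have := Real.rpow_le_rpow_of_exponent_le (show (1:ℝ) ≤ 2 by norm_num)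
            (show s/2 ≤ t/2 by linarith)
          have hC : (0:ℝ) ≤ (4*τ)^(2*τ) * Real.exp (-(2*τ)) := by positivity
          nlinarith [Real.rpow_nonneg (show (0:ℝ) ≤ 2 by norm_num) (s/2)]

lemma pcsaφ_bounds (m : ℕ) (hm : 0 < m) (c t : ℝ) :
    t - 1 ≤ (pcsaφ m c t : ℝ)/(m:ℝ) + c ∧ (pcsaφ m c t : ℝ)/(m:ℝ) + c ≤ t := by
  have hm' : (0:ℝ) < m := Nat.cast_pos.2 hm
  have h1 : (pcsaφ m c t : ℝ) ≤ (m:ℝ)*(t - c) := Int.floor_le _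
  have h2 : (m:ℝ)*(t - c) < (pcsaφ m c t : ℝ) + 1 := Int.lt_floor_add_one _
  have hm1 : (1:ℝ) ≤ m := by exact_mod_cast hm
  constructor
  · rw [← sub_le_iff_le_add, le_div_iff₀ hm']
    nlinarith
  · rw [← le_sub_iff_add_le, div_le_iff₀ hm']
    nlinarith

lemma pcsaG_aestronglyMeasurable (τ : ℝ) (m : ℕ) (c : ℝ) :
    AEStronglyMeasurable (pcsaG τ m c) volume := by
  have hφ : Measurable (fun t => (pcsaφ m c t : ℝ)/(m:ℝ) + c) :=
    (((measurable_from_top.comp ((measurable_id.sub_const c).const_mul ((m:ℝ))).floor).div_const _).add_const c)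
  exact ((pcsaF_continuous τ).measurable.comp hφ).aestronglyMeasurable

lemma pcsaG_le_B (τ : ℝ) (hτ : 0 < τ) (m : ℕ) (hm : 0 < m) (c : ℝ) (t : ℝ) :
    ‖pcsaG τ m c t‖ ≤ pcsaB τ t := by
  obtain ⟨h1, h2⟩ := pcsaφ_bounds m hm c t
  rw [show pcsaG τ m c t = pcsaF τ ((pcsaφ m c t : ℝ)/(m:ℝ) + c) from rfl,
    Real.norm_of_nonneg (pcsaF_nonneg τ _)]
  exact pcsaF_le_pcsaB τ hτ h1 h2

lemma pcsaG_integrable (τ : ℝ) (hτ : 0 < τ) (m : ℕ) (hm : 0 < m) (c : ℝ) :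
    Integrable (pcsaG τ m c) :=
  Integrable.mono' (pcsaB_integrable τ hτ) (pcsaG_aestronglyMeasurable τ m c)
    (Filter.Eventually.of_forall (pcsaG_le_B τ hτ m hm c))

lemma pcsa_hasSum (τ : ℝ) (hτ : 0 < τ) (m : ℕ) (hm : 0 < m) (c : ℝ) :
    HasSum (fun i : ℤ => pcsaF τ ((i:ℝ)/(m:ℝ) + c) * ((m:ℝ))⁻¹)
      (∫ t, pcsaG τ m c t) := by
  have hm' : (0:ℝ) < m := Nat.cast_pos.2 hm
  have hφmeas : Measurable (pcsaφ m c) :=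
    ((measurable_id.sub_const c).const_mul ((m:ℝ))).floor
  have hAmeas : ∀ i : ℤ, MeasurableSet (pcsaφ m c ⁻¹' {i}) :=
    fun i => hφmeas (measurableSet_singleton i)
  have hU : (⋃ i : ℤ, pcsaφ m c ⁻¹' {i}) = univ := by
    ext t; simp only [mem_iUnion, mem_preimage, mem_singleton_iff, mem_univ, iff_true]
    exact ⟨pcsaφ m c t, rfl⟩
  have hint : IntegrableOn (pcsaG τ m c) (⋃ i : ℤ, pcsaφ m c ⁻¹' {i}) := by
    rw [hU, integrableOn_univ]; exact pcsaG_integrable τ hτ m hm c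
  have hs := hasSum_integral_iUnion hAmeas (pairwise_disjoint_fiber _) hint
  rw [hU, setIntegral_univ] at hs
  convert hs using 2 with i
  · rfl
  have hconst : ∀ t ∈ pcsaφ m c ⁻¹' {i}, pcsaG τ m c t = pcsaF τ ((i:ℝ)/(m:ℝ) + c) := by
    intro t ht
    simp only [mem_preimage, mem_singleton_iff] at ht
    simp [pcsaG, ht]
  rw [setIntegral_congr_fun (hAmeas i) hconst, setIntegral_const, pcsaA_eq m c hm i,
    Real.volume_real_Ico, smul_eq_mul]
  rw [show c + ((i:ℝ)+1)/m - (c + (i:ℝ)/m) = (m:ℝ)⁻¹ by field_simp; ring]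
  rw [max_eq_left (by positivity)]
  ring

lemma pcsaφ_bounds' (m : ℕ) (hm : 0 < m) (c t : ℝ) :
    t - 1/(m:ℝ) ≤ (pcsaφ m c t : ℝ)/(m:ℝ) + c ∧ (pcsaφ m c t : ℝ)/(m:ℝ) + c ≤ t := by
  have hm' : (0:ℝ) < m := Nat.cast_pos.2 hm
  have h1 : (pcsaφ m c t : ℝ) ≤ (m:ℝ)*(t - c) := Int.floor_le _
  have h2 : (m:ℝ)*(t - c) < (pcsaφ m c t : ℝ) + 1 := Int.lt_floor_add_one _
  constructor
  · rw [← sub_le_iff_le_add, sub_le_iff_le_add', ← sub_le_iff_le_add', le_div_iff₀ hm']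
    have h3 : (1/(m:ℝ))*(m:ℝ) = 1 := by field_simp
    nlinarith [h3]
  · rw [← le_sub_iff_add_le, div_le_iff₀ hm']
    nlinarith

lemma pcsa_tendsto_integral (τ : ℝ) (hτ : 0 < τ) :
    Tendsto (fun m : ℕ => ∫ t, pcsaG τ m (Real.logb 2 (m:ℝ)) t) atTop
      (nhds (∫ t, pcsaF τ t)) := by
  apply tendsto_integral_filter_of_dominated_convergence (pcsaB τ)
  · exact Filter.Eventually.of_forall fun m => pcsaG_aestronglyMeasurable τ m _
  · filter_upwards [eventually_gt_atTop 0] with m hm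
    exact Filter.Eventually.of_forall fun t => pcsaG_le_B τ hτ m hm _ t
  · exact pcsaB_integrable τ hτ
  · apply Filter.Eventually.of_forall
    intro t
    have hst : Tendsto (fun m : ℕ => (pcsaφ m (Real.logb 2 (m:ℝ)) t : ℝ)/(m:ℝ) + Real.logb 2 (m:ℝ))
        atTop (nhds t) := by
      apply tendsto_of_tendsto_of_tendsto_of_le_of_le' (g := fun m : ℕ => t - 1/(m:ℝ))
        (h := fun _ => t)
      · have : Tendsto (fun m : ℕ => 1/(m:ℝ)) atTop (nhds 0) :=
          tendsto_one_div_atTop_nhds_zero_nat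
        simpa using tendsto_const_nhds.sub this
      · exact tendsto_const_nhds
      · filter_upwards [eventually_gt_atTop 0] with m hm
        exact (pcsaφ_bounds' m hm _ t).1
      · filter_upwards [eventually_gt_atTop 0] with m hm
        exact (pcsaφ_bounds' m hm _ t).2
    exact ((pcsaF_continuous τ).continuousAt.tendsto).comp hst

lemma pcsa_integral_value (τ : ℝ) (hτ : 0 < τ) :
    ∫ t, pcsaF τ t = (1 - (2:ℝ)^(-(2*τ))) * Real.Gamma (2*τ) / Real.log 2 := by
  have hlog : (0:ℝ) < Real.log 2 := Real.log_pos (by norm_num)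
  set L := Real.log 2 with hL
  set f : ℝ → ℝ := fun t => Real.exp (-L * t) with hf
  have hfpos : ∀ t, 0 < f t := fun t => Real.exp_pos _
  set g : ℝ → ℝ := fun x => ((Real.exp (-x) - Real.exp (-(2*x))) * x^(2*τ-1)) / L with hg
  have hderiv : ∀ t ∈ (univ : Set ℝ),
      HasDerivWithinAt f (Real.exp (-L * t) * (-L)) univ t := by
    intro t _
    have h := (((hasDerivAt_id t).const_mul (-L)).exp)
    simp only [mul_one, id] at h
    exact h.hasDerivWithinAt
  have hinj : InjOn f univ := by
    intro a _ b _ hab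
    have := Real.exp_injective hab
    have hL0 : L ≠ 0 := ne_of_gt hlog
    field_simp at this
    linarith
  have himg : f '' univ = Ioi 0 := by
    rw [image_univ, hf]
    have : Set.range (fun t : ℝ => Real.exp (-L * t)) = Set.range Real.exp := by
      rw [show (fun t : ℝ => Real.exp (-L * t)) = Real.exp ∘ (fun t : ℝ => -L * t) from rfl,
        Set.range_comp]
      congr 1
      rw [Set.range_eq_univ.2 (mul_left_surjective₀ (by linarith : -L ≠ 0)), image_univ]
    rw [this, Real.range_exp]
  have key := integral_image_eq_integral_abs_deriv_smul MeasurableSet.univ hderiv hinj g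
  rw [himg] at key
  have hrhs : ∫ t in (univ : Set ℝ), |Real.exp (-L * t) * (-L)| • g (f t) = ∫ t, pcsaF τ t := by
    rw [setIntegral_univ]
    apply integral_congr_ae
    filter_upwards with t
    have he : (0:ℝ) < Real.exp (-L * t) := Real.exp_pos _
    have habs : |Real.exp (-L * t) * (-L)| = Real.exp (-L * t) * L := by
      rw [abs_of_nonpos (by nlinarith)]; ring
    have h2t : (2:ℝ)^(-t) = Real.exp (-L * t) := by
      rw [rpow2_exp, ← hL]; ring_nf
    rw [habs, smul_eq_mul, hg]
    unfold pcsaF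
    rw [two_rpow_eq t (2*τ), h2t]
    set e := Real.exp (-L * t) with hee
    have hpow : e^(2*τ-1) * e = e^(2*τ) := by
      rw [← Real.rpow_add_one (ne_of_gt he) (2*τ-1)]
      norm_num
    rw [show f t = e from rfl]
    field_simp
    linear_combination (Real.exp (-e) - Real.exp (-(e*2))) * hpow
  rw [← hrhs, ← key]
  have hτ2 : (0:ℝ) < 2*τ := by linarith
  have I1 : IntegrableOn (fun x : ℝ => Real.exp (-x) * x^(2*τ-1)) (Ioi 0) :=
    Real.GammaIntegral_convergent hτ2
  have hmeas2 : Measurable (fun x : ℝ => Real.exp (-(2*x)) * x^(2*τ-1)) := by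
    apply Measurable.mul
    · exact Real.measurable_exp.comp (measurable_id.const_mul (2:ℝ)).neg
    · exact measurable_id.pow_const _ |>.mono le_rfl le_rfl |>.comp measurable_id |>.mono le_rfl le_rfl
  have I2 : IntegrableOn (fun x : ℝ => Real.exp (-(2*x)) * x^(2*τ-1)) (Ioi 0) := by
    apply Integrable.mono' I1 hmeas2.aestronglyMeasurable.restrict
    filter_upwards [ae_restrict_mem measurableSet_Ioi] with x hx
    have hx0 : (0:ℝ) < x := hx
    rw [Real.norm_of_nonneg (by positivity)]
    have h1 : Real.exp (-(2*x)) ≤ Real.exp (-x) := Real.exp_le_exp.2 (by linarith)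
    have hp : (0:ℝ) ≤ x^(2*τ-1) := Real.rpow_nonneg hx0.le _
    nlinarith
  have hgsplit : ∫ x in Ioi 0, g x
      = ((∫ x in Ioi 0, Real.exp (-x) * x^(2*τ-1))
          - ∫ x in Ioi 0, Real.exp (-(2*x)) * x^(2*τ-1)) / L := by
    rw [← integral_sub I1 I2, ← integral_div]
    apply setIntegral_congr_fun measurableSet_Ioi
    intro x hx
    simp only [hg]
    ring
  have hI1v : ∫ x in Ioi 0, Real.exp (-x) * x^(2*τ-1) = Real.Gamma (2*τ) := by
    have h := Real.integral_rpow_mul_exp_neg_mul_Ioi hτ2 (by norm_num : (0:ℝ) < 1)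
    simp only [one_mul, one_div, inv_one, Real.one_rpow] at h
    rw [← h]
    apply setIntegral_congr_fun measurableSet_Ioi
    intro x hx
    ring
  have hI2v : ∫ x in Ioi 0, Real.exp (-(2*x)) * x^(2*τ-1)
      = (2:ℝ)^(-(2*τ)) * Real.Gamma (2*τ) := by
    have h := Real.integral_rpow_mul_exp_neg_mul_Ioi hτ2 (by norm_num : (0:ℝ) < 2)
    have h2 : ((1:ℝ)/2)^(2*τ) = (2:ℝ)^(-(2*τ)) := by
      rw [one_div, Real.inv_rpow (by norm_num), ← Real.rpow_neg (by norm_num)]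
    rw [h2] at h
    rw [← h]
    apply setIntegral_congr_fun measurableSet_Ioi
    intro x hx
    ring
  rw [hgsplit, hI1v, hI2v]
  ring

/-- Limiting variance of the τ-GRA of a uniformly-offset PCSA sketch. -/
theorem tGRA_pcsa_variance_limit_sum (τ : ℝ) (hτ : 0 < τ) :
    (∀ m : ℕ, 0 < m → Summable (fun i : ℤ =>
      (Real.exp (-(2:ℝ) ^ (-((i:ℝ) / (m:ℝ) + Real.logb 2 (m:ℝ)))) -
        Real.exp (-(2 * (2:ℝ) ^ (-((i:ℝ) / (m:ℝ) + Real.logb 2 (m:ℝ)))))) *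
        (2:ℝ) ^ (-(2 * τ * ((i:ℝ) / (m:ℝ) + Real.logb 2 (m:ℝ)))))) ∧
    Tendsto (fun m : ℕ => (m:ℝ)⁻¹ * ∑' i : ℤ,
        (Real.exp (-(2:ℝ) ^ (-((i:ℝ) / (m:ℝ) + Real.logb 2 (m:ℝ)))) -
          Real.exp (-(2 * (2:ℝ) ^ (-((i:ℝ) / (m:ℝ) + Real.logb 2 (m:ℝ)))))) *
          (2:ℝ) ^ (-(2 * τ * ((i:ℝ) / (m:ℝ) + Real.logb 2 (m:ℝ)))))
      atTop (nhds ((1 - 2 ^ (-(2 * τ))) * Real.Gamma (2 * τ) / Real.log 2)) := by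
  constructor
  · intro m hm
    have hm' : ((m:ℝ)) ≠ 0 := Nat.cast_ne_zero.2 hm.ne'
    have hs := ((pcsa_hasSum τ hτ m hm (Real.logb 2 (m:ℝ))).summable).mul_right ((m:ℝ))
    refine hs.congr fun i => ?_
    show pcsaF τ ((i:ℝ)/(m:ℝ) + Real.logb 2 (m:ℝ)) * ((m:ℝ))⁻¹ * (m:ℝ) = _
    rw [mul_assoc, inv_mul_cancel₀ hm', mul_one]
    rfl
  · have heq : ∀ᶠ m : ℕ in atTop,
        (∫ t, pcsaG τ m (Real.logb 2 (m:ℝ)) t) = (m:ℝ)⁻¹ * ∑' i : ℤ,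
        (Real.exp (-(2:ℝ) ^ (-((i:ℝ) / (m:ℝ) + Real.logb 2 (m:ℝ)))) -
          Real.exp (-(2 * (2:ℝ) ^ (-((i:ℝ) / (m:ℝ) + Real.logb 2 (m:ℝ)))))) *
          (2:ℝ) ^ (-(2 * τ * ((i:ℝ) / (m:ℝ) + Real.logb 2 (m:ℝ)))) := by
      filter_upwards [eventually_gt_atTop 0] with m hm
      have hts := (pcsa_hasSum τ hτ m hm (Real.logb 2 (m:ℝ))).tsum_eq
      rw [← hts, tsum_mul_right]
      show _ = (m:ℝ)⁻¹ * ∑' i : ℤ, pcsaF τ ((i:ℝ)/(m:ℝ) + Real.logb 2 (m:ℝ))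
      ring
    have h := pcsa_tendsto_integral τ hτ
    rw [pcsa_integral_value τ hτ] at h
    exact h.congr' heq
end stepA
end

section
/- Let (Ω, P) be a probability space, let R : Ω → ℝ be a random variable uniformly distributed on [0,1), let g : ℝ → ℝ≥0 be a measurable function, and let s ∈ ℝ. Then the random variable ω ↦ Σ_{i∈ℤ} g(i + R(ω)) has the same distribution as the random variable ω ↦ Σ_{i∈ℤ} g(i + R(ω) + s), where the sums take values in [0, ∞]. -/
/-!
The function `F x = ∑' i : ℤ, g (i + x)` is `1`-periodic, and the two sums are `F ∘ R` and
`F ∘ (· + s) ∘ R`. Translating by `s` carries Lebesgue measure on `(0, 1]` to Lebesgue measure on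
`(s, s + 1]`, and both intervals are fundamental domains of the translation action of `ℤ`, which
meet every `ℤ`-invariant set, such as a preimage under `F`, in the same measure.
-/

open Function MeasureTheory Set

theorem Function.periodic_tsum_int_add {M : Type*} [AddCommMonoid M] [TopologicalSpace M]
    (f : ℝ → M) : Periodic (fun x => ∑' i : ℤ, f (i + x)) 1 := fun x => by
  show ∑' i : ℤ, f (i + (x + 1)) = ∑' i : ℤ, f (i + x)
  rw [← (Equiv.addRight (1 : ℤ)).tsum_eq (fun i : ℤ => f (i + x))]
  exact tsum_congr fun i => congr_arg f (by rw [Equiv.coe_addRight]; push_cast; ring)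

namespace Function.Periodic

variable {β : Type*} [MeasurableSpace β] {F : ℝ → β} {T : ℝ}

theorem map_volume_restrict_Ioc_eq (hF : Periodic F T) (hT : 0 < T) (hFm : Measurable F)
    (t u : ℝ) :
    (volume.restrict (Ioc t (t + T))).map F = (volume.restrict (Ioc u (u + T))).map F := by
  ext A hA
  have hinvariant :
      ∀ g : AddSubgroup.zmultiples T, (fun x => g +ᵥ x) ⁻¹' (F ⁻¹' A) = F ⁻¹' A := by
    rintro ⟨_, n, rfl⟩
    ext x
    simp [AddSubgroup.vadd_def, add_comm _ x, hF.int_mul n x]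
  rw [Measure.map_apply hFm hA, Measure.map_apply hFm hA,
    Measure.restrict_apply (hFm hA), Measure.restrict_apply (hFm hA)]
  exact (isAddFundamentalDomain_Ioc hT t).measure_set_eq (isAddFundamentalDomain_Ioc hT u)
    (hFm hA) hinvariant

theorem map_comp_add_volume_restrict_Ico (hF : Periodic F T) (hT : 0 < T) (hFm : Measurable F)
    (s : ℝ) :
    (volume.restrict (Ico 0 T)).map (fun x => F (x + s)) = (volume.restrict (Ico 0 T)).map F := by
  have hshift :
      (volume.restrict (Ioc 0 (0 + T))).map (· + s) = volume.restrict (Ioc s (s + T)) := by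
    simpa [preimage_add_const_Ioc] using ((measurePreserving_add_right volume s).restrict_preimage
      (measurableSet_Ioc (a := s) (b := s + T))).map_eq
  change (volume.restrict (Ico 0 T)).map (F ∘ (· + s)) = _
  rw [Measure.restrict_congr_set Ico_ae_eq_Ioc, ← zero_add T,
    ← Measure.map_map hFm (measurable_add_const s), hshift]
  exact hF.map_volume_restrict_Ioc_eq hT hFm s 0

end Function.Periodic

theorem shift_invariance_uniform_offset_general {Ω : Type*} [MeasurableSpace Ω] (P : Measure Ω)
    (R : Ω → ℝ) (hR : Measurable R)
    (hunif : Measure.map R P = volume.restrict (Set.Ico (0:ℝ) 1))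
    (g : ℝ → NNReal) (hg : Measurable g) (s : ℝ) :
    Measure.map (fun ω => ∑' i : ℤ, (g ((i:ℝ) + R ω) : ENNReal)) P =
      Measure.map (fun ω => ∑' i : ℤ, (g ((i:ℝ) + R ω + s) : ENNReal)) P := by
  set F : ℝ → ENNReal := fun x => ∑' i : ℤ, (g ((i:ℝ) + x) : ENNReal)
  have hFm : Measurable F := by fun_prop
  have hshifted :
      (fun ω => ∑' i : ℤ, (g ((i:ℝ) + R ω + s) : ENNReal)) = (F ∘ (· + s)) ∘ R := by
    simp only [F, Function.comp_def, add_assoc]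
  rw [show (fun ω => ∑' i : ℤ, (g ((i:ℝ) + R ω) : ENNReal)) = F ∘ R from rfl, hshifted,
    ← Measure.map_map hFm hR, ← Measure.map_map (hFm.comp (measurable_add_const s)) hR, hunif]
  exact ((periodic_tsum_int_add fun x => (g x : ENNReal)).map_comp_add_volume_restrict_Ico
    one_pos hFm s).symm

/-- Shift-invariance in distribution of sums Σ_{i∈ℤ} g(i + R) when R is uniform on [0,1). -/
theorem shift_invariance_uniform_offset {Ω : Type*} [MeasurableSpace Ω] (P : Measure Ω)
    [IsProbabilityMeasure P]
    (R : Ω → ℝ) (hR : Measurable R)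
    (hunif : Measure.map R P = volume.restrict (Set.Ico (0:ℝ) 1))
    (g : ℝ → NNReal) (hg : Measurable g) (s : ℝ) :
    Measure.map (fun ω => ∑' i : ℤ, (g ((i:ℝ) + R ω) : ENNReal)) P =
      Measure.map (fun ω => ∑' i : ℤ, (g ((i:ℝ) + R ω + s) : ENNReal)) P :=
  shift_invariance_uniform_offset_general P R hR hunif g hg s
end
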